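/- arXiv:math/0509047 — 5 statements merged into one kernel-verified Lean document; each statement's English description precedes it below -/
import Mathlib

section
/- Let k1,k2 ≥ 0, n = k1+k2 ≥ 1, E ⊆ ℝ measurable, V, φ⁺, φ⁻ : ℝ → ℝ measurable, and suppose z ↦ |z|^m φ^±(z) e^{−V(z)} is integrable on E for every 0 ≤ m ≤ 2n−2. Define ρ_i(z) := z^{i−1} φ⁺(z) e^{−V(z)} for 1 ≤ i ≤ k1 and ρ_{k1+i}(z) := z^{i−1} φ⁻(z) e^{−V(z)} for 1 ≤ i ≤ k2. Then (1/n!) ∫_{E^n} Δ_n(z_1,…,z_n) · det(ρ_i(z_j))_{1≤i,j≤n} ∏_{i=1}^n dz_i = (1/(k1! k2!)) ∫_{E^{k1}×E^{k2}} Δ_n(x,y) · Δ_{k1}(x) · Δ_{k2}(y) · ∏_{i=1}^{k1} φ⁺(x_i) e^{−V(x_i)} dx_i · ∏_{i=1}^{k2} φ⁻(y_i) e^{−V(y_i)} dy_i. -/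
set_option maxHeartbeats 1000000


open MeasureTheory

noncomputable section

/-- The Vandermonde determinant `Δ_m(z) = ∏_{1 ≤ i < j ≤ m} (z_j - z_i)`. -/
def vdm {m : ℕ} (z : Fin m → ℝ) : ℝ :=
  ∏ i : Fin m, ∏ j ∈ Finset.Ioi i, (z j - z i)

/-- `ρ_i(z) = z^{i-1} φ⁺(z) e^{-V(z)}` for `1 ≤ i ≤ k1` and
`ρ_{k1+i}(z) = z^{i-1} φ⁻(z) e^{-V(z)}` for `1 ≤ i ≤ k2` (0-indexed). -/
def rho (k1 k2 : ℕ) (V φp φm : ℝ → ℝ) (i : Fin (k1 + k2)) (z : ℝ) : ℝ :=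
  if (i : ℕ) < k1 then z ^ (i : ℕ) * φp z * Real.exp (-V z)
  else z ^ ((i : ℕ) - k1) * φm z * Real.exp (-V z)

namespace Aux1

open Equiv

lemma sum_sum_perm {d : ℕ} (C : Matrix (Fin d) (Fin d) ℝ) :
    ∑ σ : Perm (Fin d), ∑ τ : Perm (Fin d),
      (((Perm.sign σ : ℤ) : ℝ) * ((Perm.sign τ : ℤ) : ℝ)) * ∏ j, C (σ j) (τ j)
      = (d.factorial : ℝ) * (Matrix.det C) := by
  have h : ∀ σ : Perm (Fin d),
      ∑ τ : Perm (Fin d), (((Perm.sign σ : ℤ) : ℝ) * ((Perm.sign τ : ℤ) : ℝ)) * ∏ j, C (σ j) (τ j)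
      = Matrix.det C := by
    intro σ
    rw [← Equiv.sum_comp (Equiv.mulRight σ) (fun τ => (((Perm.sign σ : ℤ) : ℝ) * ((Perm.sign τ : ℤ) : ℝ)) * ∏ j, C (σ j) (τ j))]
    have key : ∀ π : Perm (Fin d),
        (((Perm.sign σ : ℤ) : ℝ) * ((Perm.sign (Equiv.mulRight σ π) : ℤ) : ℝ)) *
          ∏ j, C (σ j) ((Equiv.mulRight σ π) j)
        = ((Perm.sign π : ℤ) : ℝ) * ∏ i, C.transpose (π i) i := by
      intro π
      have h1 : ∏ j, C (σ j) ((Equiv.mulRight σ π) j) = ∏ i, C.transpose (π i) i := by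
        simp only [Equiv.coe_mulRight, Perm.mul_apply, Matrix.transpose_apply]
        exact Equiv.prod_comp σ (fun i => C i (π i))
      rw [h1]
      congr 1
      have : Perm.sign (Equiv.mulRight σ π) = Perm.sign π * Perm.sign σ := by
        simp [Equiv.mulRight, map_mul]
      rw [this]
      rcases Int.units_eq_one_or (Perm.sign σ) with h | h <;>
        rcases Int.units_eq_one_or (Perm.sign π) with h' | h' <;> simp [h, h']
    rw [Finset.sum_congr rfl fun π _ => key π, ← Matrix.det_apply', Matrix.det_transpose]
  rw [Finset.sum_congr rfl fun σ _ => h σ, Finset.sum_const, Finset.card_univ,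
    Fintype.card_perm, nsmul_eq_mul]
  simp

lemma vdm_expand {d : ℕ} (z : Fin d → ℝ) :
    vdm z = ∑ σ : Perm (Fin d), ((Perm.sign σ : ℤ) : ℝ) * ∏ i, (z i) ^ ((σ i : ℕ)) := by
  have h : vdm z = Matrix.det (Matrix.vandermonde z) := (Matrix.det_vandermonde z).symm
  rw [h, ← Matrix.det_transpose, Matrix.det_apply']
  exact Finset.sum_congr rfl fun σ _ => by
    simp [Matrix.transpose_apply, Matrix.vandermonde_apply]

lemma collapse {k1 k2 : ℕ} (C : Matrix (Fin (k1+k2)) (Fin (k1+k2)) ℝ) :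
    ∑ π : Perm (Fin (k1+k2)), ∑ σ : Perm (Fin k1), ∑ τ : Perm (Fin k2),
      (((Perm.sign π : ℤ):ℝ) * ((((Perm.sign σ : ℤ):ℝ)) * ((Perm.sign τ : ℤ):ℝ))) *
        ((∏ a, C (π (Fin.castAdd k2 a)) (Fin.castAdd k2 (σ a))) *
         (∏ b, C (π (Fin.natAdd k1 b)) (Fin.natAdd k1 (τ b))))
    = ((k1.factorial : ℝ) * (k2.factorial : ℝ)) * C.det := by
  have h : ∀ σ : Perm (Fin k1), ∀ τ : Perm (Fin k2),
      ∑ π : Perm (Fin (k1+k2)),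
        (((Perm.sign π : ℤ):ℝ) * ((((Perm.sign σ : ℤ):ℝ)) * ((Perm.sign τ : ℤ):ℝ))) *
          ((∏ a, C (π (Fin.castAdd k2 a)) (Fin.castAdd k2 (σ a))) *
           (∏ b, C (π (Fin.natAdd k1 b)) (Fin.natAdd k1 (τ b))))
      = C.det := by
    intro σ τ
    set ι : Perm (Fin (k1+k2)) := Equiv.permCongr finSumFinEquiv (Equiv.sumCongr σ τ) with hι
    have hι1 : ∀ a, ι (Fin.castAdd k2 a) = Fin.castAdd k2 (σ a) := by
      intro a
      simp [hι, Equiv.permCongr_apply, finSumFinEquiv_symm_apply_castAdd,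
        finSumFinEquiv_apply_left]
    have hι2 : ∀ b, ι (Fin.natAdd k1 b) = Fin.natAdd k1 (τ b) := by
      intro b
      simp [hι, Equiv.permCongr_apply, finSumFinEquiv_symm_apply_natAdd,
        finSumFinEquiv_apply_right]
    have hsign : Perm.sign ι = Perm.sign σ * Perm.sign τ := by
      rw [hι, Equiv.Perm.sign_permCongr, Equiv.Perm.sign_sumCongr]
    rw [← Equiv.sum_comp (Equiv.mulRight ι)
      (fun π => (((Perm.sign π : ℤ):ℝ) * ((((Perm.sign σ : ℤ):ℝ)) * ((Perm.sign τ : ℤ):ℝ))) *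
          ((∏ a, C (π (Fin.castAdd k2 a)) (Fin.castAdd k2 (σ a))) *
           (∏ b, C (π (Fin.natAdd k1 b)) (Fin.natAdd k1 (τ b)))))]
    have key : ∀ π : Perm (Fin (k1+k2)),
        (((Perm.sign ((Equiv.mulRight ι) π) : ℤ):ℝ) *
            ((((Perm.sign σ : ℤ):ℝ)) * ((Perm.sign τ : ℤ):ℝ))) *
          ((∏ a, C (((Equiv.mulRight ι) π) (Fin.castAdd k2 a)) (Fin.castAdd k2 (σ a))) *
           (∏ b, C (((Equiv.mulRight ι) π) (Fin.natAdd k1 b)) (Fin.natAdd k1 (τ b))))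
        = ((Perm.sign π : ℤ):ℝ) * ∏ i, C (π i) i := by
      intro π
      have hmr : ∀ j, ((Equiv.mulRight ι) π) j = π (ι j) := fun j => rfl
      have hprod : ((∏ a, C (((Equiv.mulRight ι) π) (Fin.castAdd k2 a)) (Fin.castAdd k2 (σ a))) *
           (∏ b, C (((Equiv.mulRight ι) π) (Fin.natAdd k1 b)) (Fin.natAdd k1 (τ b))))
          = ∏ i, C (π i) i := by
        simp_rw [hmr]
        have e1 : ∀ a ∈ Finset.univ, C (π (ι (Fin.castAdd k2 a))) (Fin.castAdd k2 (σ a))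
            = C (π (ι (Fin.castAdd k2 a))) (ι (Fin.castAdd k2 a)) := fun a _ => by rw [hι1]
        have e2 : ∀ b ∈ Finset.univ, C (π (ι (Fin.natAdd k1 b))) (Fin.natAdd k1 (τ b))
            = C (π (ι (Fin.natAdd k1 b))) (ι (Fin.natAdd k1 b)) := fun b _ => by rw [hι2]
        rw [Finset.prod_congr rfl e1, Finset.prod_congr rfl e2,
          ← Fin.prod_univ_add (fun j => C (π (ι j)) (ι j))]
        exact Equiv.prod_comp ι (fun j => C (π j) j)
      have hs : ((Perm.sign ((Equiv.mulRight ι) π) : ℤ):ℝ) *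
            ((((Perm.sign σ : ℤ):ℝ)) * ((Perm.sign τ : ℤ):ℝ)) = ((Perm.sign π : ℤ):ℝ) := by
        have hh : (Equiv.mulRight ι) π = π * ι := rfl
        rw [hh, map_mul, hsign]
        rcases Int.units_eq_one_or (Perm.sign π) with h1 | h1 <;>
          rcases Int.units_eq_one_or (Perm.sign σ) with h2 | h2 <;>
          rcases Int.units_eq_one_or (Perm.sign τ) with h3 | h3 <;> simp [h1, h2, h3]
      rw [hprod, hs]
    rw [Finset.sum_congr rfl fun π _ => key π, ← Matrix.det_apply']
  rw [Finset.sum_comm]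
  rw [Finset.sum_congr rfl fun σ (_ : σ ∈ Finset.univ) => Finset.sum_comm]
  rw [Finset.sum_congr rfl fun σ (_ : σ ∈ Finset.univ) =>
    Finset.sum_congr rfl fun τ (_ : τ ∈ Finset.univ) => h σ τ]
  simp [Finset.card_univ, Fintype.card_perm, mul_assoc]

lemma sum3_rev {α β γ M : Type*} [AddCommMonoid M] [Fintype α] [Fintype β] [Fintype γ]
    (f : α → β → γ → M) :
    ∑ c : γ, ∑ b : β, ∑ a : α, f a b c = ∑ a : α, ∑ b : β, ∑ c : γ, f a b c := by
  rw [Finset.sum_comm]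
  rw [Finset.sum_congr rfl fun b (_ : b ∈ Finset.univ) => Finset.sum_comm]
  rw [Finset.sum_comm]

lemma pi_restrict {ι : Type*} [Fintype ι] (μ : Measure ℝ) [SigmaFinite μ]
    (E : Set ℝ) (hE : MeasurableSet E) :
    (Measure.pi fun _ : ι => μ).restrict (Set.univ.pi fun _ => E)
      = Measure.pi (fun _ : ι => μ.restrict E) := by
  refine (Measure.pi_eq fun s hs => ?_).symm
  rw [Measure.restrict_apply (MeasurableSet.univ_pi hs), ← Set.pi_inter_distrib,
    Measure.pi_pi]
  simp_rw [Measure.restrict_apply (hs _)]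

lemma integral_pi_prod {ι : Type*} [Fintype ι] (μ : Measure ℝ) [SigmaFinite μ]
    (f : ι → ℝ → ℝ) :
    ∫ x : ι → ℝ, ∏ i, f i (x i) ∂(Measure.pi fun _ => μ) = ∏ i, ∫ z, f i z ∂μ := by
  letI : MeasureSpace ℝ := ⟨μ⟩
  exact integral_fintype_prod_eq_prod f

lemma integrable_pi_prod {ι : Type*} [Fintype ι] (μ : Measure ℝ) [SigmaFinite μ]
    {f : ι → ℝ → ℝ} (hf : ∀ i, Integrable (f i) μ) :
    Integrable (fun x : ι → ℝ => ∏ i, f i (x i)) (Measure.pi fun _ => μ) := by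
  letI : MeasureSpace ℝ := ⟨μ⟩
  exact Integrable.fintype_prod hf

lemma int_of_abs {μ : Measure ℝ} {w : ℝ → ℝ} (hw : Measurable w) {m : ℕ}
    (h : Integrable (fun z => |z| ^ m * w z) μ) :
    Integrable (fun z => z ^ m * w z) μ := by
  refine h.abs.mono' ((measurable_id.pow_const m).mul hw).aestronglyMeasurable ?_
  filter_upwards with z
  simp [Real.norm_eq_abs, abs_mul, abs_pow, abs_abs, le_refl]

lemma int_of_abs2 {μ : Measure ℝ} {w : ℝ → ℝ} (hw : Measurable w) {a b : ℕ}
    (h : Integrable (fun z => |z| ^ (a + b) * w z) μ) :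
    Integrable (fun z => z ^ a * (z ^ b * w z)) μ := by
  have e : (fun z : ℝ => z ^ a * (z ^ b * w z)) = fun z => z ^ (a + b) * w z := by
    funext z; rw [pow_add]; ring
  rw [e]; exact int_of_abs hw h

end Aux1

open Aux1 Equiv

/-- `(1/n!) ∫_{E^n} Δ_n(z) det(ρ_i(z_j)) dz
= (1/(k1!k2!)) ∫_{E^{k1}×E^{k2}} Δ_n(x,y) Δ_{k1}(x) Δ_{k2}(y)
∏ φ⁺(x_i)e^{-V(x_i)} dx ∏ φ⁻(y_i)e^{-V(y_i)} dy`, where `n = k1 + k2`. -/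
theorem statement1 (k1 k2 : ℕ) (hn : 1 ≤ k1 + k2) (E : Set ℝ) (hE : MeasurableSet E)
    (V φp φm : ℝ → ℝ) (hV : Measurable V) (hφp : Measurable φp) (hφm : Measurable φm)
    (hintp : ∀ m : ℕ, m ≤ 2 * (k1 + k2) - 2 →
      IntegrableOn (fun z : ℝ => |z| ^ m * (φp z * Real.exp (-V z))) E)
    (hintm : ∀ m : ℕ, m ≤ 2 * (k1 + k2) - 2 →
      IntegrableOn (fun z : ℝ => |z| ^ m * (φm z * Real.exp (-V z))) E) :
    (1 / ((k1 + k2).factorial : ℝ)) *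
        ∫ z in Set.univ.pi (fun _ : Fin (k1 + k2) => E),
          vdm z * Matrix.det (Matrix.of fun i j : Fin (k1 + k2) => rho k1 k2 V φp φm i (z j))
      = (1 / ((k1.factorial : ℝ) * (k2.factorial : ℝ))) *
          ∫ x in Set.univ.pi (fun _ : Fin k1 => E),
            ∫ y in Set.univ.pi (fun _ : Fin k2 => E),
              vdm (Fin.append x y) * vdm x * vdm y *
                (∏ i, φp (x i) * Real.exp (-V (x i))) *
                (∏ i, φm (y i) * Real.exp (-V (y i))) := by
  classical
  set μ : Measure ℝ := volume.restrict E with hμdef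
  haveI hsf : SigmaFinite μ := Restrict.sigmaFinite _ _
  have hWpm : Measurable fun z : ℝ => φp z * Real.exp (-V z) := hφp.mul (hV.neg.exp)
  have hWmm : Measurable fun z : ℝ => φm z * Real.exp (-V z) := hφm.mul (hV.neg.exp)
  -- integrability of z^a * rho j z
  have hrho : ∀ (j : Fin (k1 + k2)) (a : ℕ), a < k1 + k2 →
      Integrable (fun z => z ^ a * rho k1 k2 V φp φm j z) μ := by
    intro j a ha
    by_cases hj : (j : ℕ) < k1
    · have e : (fun z : ℝ => z ^ a * rho k1 k2 V φp φm j z)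
          = fun z => z ^ a * (z ^ (j : ℕ) * (φp z * Real.exp (-V z))) := by
        funext z; simp only [rho, if_pos hj]; ring
      rw [e]
      exact int_of_abs2 hWpm (hintp (a + (j : ℕ)) (by omega))
    · have e : (fun z : ℝ => z ^ a * rho k1 k2 V φp φm j z)
          = fun z => z ^ a * (z ^ ((j : ℕ) - k1) * (φm z * Real.exp (-V z))) := by
        funext z; simp only [rho, if_neg hj]; ring
      rw [e]
      have hjlt : (j : ℕ) < k1 + k2 := j.isLt
      exact int_of_abs2 hWmm (hintm (a + ((j : ℕ) - k1)) (by omega))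
  set C : Matrix (Fin (k1 + k2)) (Fin (k1 + k2)) ℝ :=
    Matrix.of fun i j => ∫ z, z ^ (i : ℕ) * rho k1 k2 V φp φm j z ∂μ with hCdef
  have hrestrict : ∀ (d : ℕ),
      (volume : Measure (Fin d → ℝ)).restrict (Set.univ.pi fun _ => E)
        = Measure.pi (fun _ : Fin d => μ) := by
    intro d
    rw [MeasureTheory.volume_pi, pi_restrict _ _ hE]
  clear_value μ
  -- LHS
  have hL : (∫ z in Set.univ.pi (fun _ : Fin (k1 + k2) => E),
      vdm z * Matrix.det (Matrix.of fun i j : Fin (k1 + k2) => rho k1 k2 V φp φm i (z j)))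
      = (((k1 + k2).factorial : ℝ)) * C.det := by
    rw [hrestrict (k1 + k2)]
    have hfun : (fun z : Fin (k1 + k2) → ℝ =>
        vdm z * Matrix.det (Matrix.of fun i j : Fin (k1 + k2) => rho k1 k2 V φp φm i (z j)))
        = fun z => ∑ p : Perm (Fin (k1 + k2)) × Perm (Fin (k1 + k2)),
            (((Perm.sign p.1 : ℤ) : ℝ) * ((Perm.sign p.2 : ℤ) : ℝ)) *
              ∏ j, ((z j) ^ ((p.1 j : ℕ)) * rho k1 k2 V φp φm (p.2 j) (z j)) := by
      funext z
      rw [vdm_expand z, Matrix.det_apply', Finset.sum_mul_sum]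
      rw [Fintype.sum_prod_type]
      refine Finset.sum_congr rfl fun σ _ => Finset.sum_congr rfl fun τ _ => ?_
      simp only [Matrix.of_apply]
      conv_rhs => rw [Finset.prod_mul_distrib]
      ring
    rw [hfun]
    rw [integral_finset_sum _ (fun p _ =>
      (integrable_pi_prod μ (fun j => hrho (p.2 j) ((p.1 j : ℕ)) (p.1 j).isLt)).const_mul _)]
    have hterm : ∀ p : Perm (Fin (k1 + k2)) × Perm (Fin (k1 + k2)),
        (∫ z, (((Perm.sign p.1 : ℤ) : ℝ) * ((Perm.sign p.2 : ℤ) : ℝ)) *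
            ∏ j, ((z j) ^ ((p.1 j : ℕ)) * rho k1 k2 V φp φm (p.2 j) (z j))
            ∂(Measure.pi fun _ : Fin (k1 + k2) => μ))
        = (((Perm.sign p.1 : ℤ) : ℝ) * ((Perm.sign p.2 : ℤ) : ℝ)) * ∏ j, C (p.1 j) (p.2 j) := by
      intro p
      rw [integral_const_mul]
      congr 1
      exact integral_pi_prod μ (fun j => fun t => t ^ ((p.1 j : ℕ)) * rho k1 k2 V φp φm (p.2 j) t)
    rw [Finset.sum_congr rfl fun p _ => hterm p, Fintype.sum_prod_type]
    exact sum_sum_perm C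
  -- RHS
  have hR : (∫ x in Set.univ.pi (fun _ : Fin k1 => E),
        ∫ y in Set.univ.pi (fun _ : Fin k2 => E),
          vdm (Fin.append x y) * vdm x * vdm y *
            (∏ i, φp (x i) * Real.exp (-V (x i))) *
            (∏ i, φm (y i) * Real.exp (-V (y i))))
      = ((k1.factorial : ℝ) * (k2.factorial : ℝ)) * C.det := by
    have hFa : ∀ (q : Perm (Fin (k1 + k2)) × Perm (Fin k1) × Perm (Fin k2)) (a : Fin k1),
        Integrable (fun t : ℝ => t ^ ((q.1 (Fin.castAdd k2 a) : ℕ)) *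
          (t ^ ((q.2.1 a : ℕ)) * (φp t * Real.exp (-V t)))) μ := by
      intro q a
      rw [hμdef]
      refine int_of_abs2 hWpm (hintp _ ?_)
      have h1 : (q.1 (Fin.castAdd k2 a) : ℕ) < k1 + k2 := (q.1 _).isLt
      have h2 : (q.2.1 a : ℕ) < k1 := (q.2.1 a).isLt
      omega
    have hGb : ∀ (q : Perm (Fin (k1 + k2)) × Perm (Fin k1) × Perm (Fin k2)) (b : Fin k2),
        Integrable (fun t : ℝ => t ^ ((q.1 (Fin.natAdd k1 b) : ℕ)) *
          (t ^ ((q.2.2 b : ℕ)) * (φm t * Real.exp (-V t)))) μ := by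
      intro q b
      rw [hμdef]
      refine int_of_abs2 hWmm (hintm _ ?_)
      have h1 : (q.1 (Fin.natAdd k1 b) : ℕ) < k1 + k2 := (q.1 _).isLt
      have h2 : (q.2.2 b : ℕ) < k2 := (q.2.2 b).isLt
      omega
    have hCp : ∀ (i : Fin (k1 + k2)) (c : Fin k1),
        (∫ t, t ^ (i : ℕ) * (t ^ ((c : ℕ)) * (φp t * Real.exp (-V t))) ∂μ)
        = C i (Fin.castAdd k2 c) := by
      intro i c
      have e : (fun t : ℝ => t ^ (i : ℕ) * (t ^ ((c : ℕ)) * (φp t * Real.exp (-V t))))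
          = fun t => t ^ (i : ℕ) * rho k1 k2 V φp φm (Fin.castAdd k2 c) t := by
        funext t
        simp only [rho, Fin.coe_castAdd]
        rw [if_pos c.isLt]
        ring
      rw [e]
      rfl
    have hCm : ∀ (i : Fin (k1 + k2)) (c : Fin k2),
        (∫ t, t ^ (i : ℕ) * (t ^ ((c : ℕ)) * (φm t * Real.exp (-V t))) ∂μ)
        = C i (Fin.natAdd k1 c) := by
      intro i c
      have e : (fun t : ℝ => t ^ (i : ℕ) * (t ^ ((c : ℕ)) * (φm t * Real.exp (-V t))))
          = fun t => t ^ (i : ℕ) * rho k1 k2 V φp φm (Fin.natAdd k1 c) t := by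
        funext t
        simp only [rho, Fin.coe_natAdd]
        rw [if_neg (by omega), Nat.add_sub_cancel_left]
        ring
      rw [e]
      rfl
    have hfun2 : ∀ (x : Fin k1 → ℝ) (y : Fin k2 → ℝ),
        vdm (Fin.append x y) * vdm x * vdm y *
            (∏ i, φp (x i) * Real.exp (-V (x i))) *
            (∏ i, φm (y i) * Real.exp (-V (y i)))
        = ∑ q : Perm (Fin (k1 + k2)) × Perm (Fin k1) × Perm (Fin k2),
            (((Perm.sign q.1 : ℤ) : ℝ) * (((Perm.sign q.2.1 : ℤ) : ℝ) * ((Perm.sign q.2.2 : ℤ) : ℝ))) *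
              ((∏ a, ((x a) ^ ((q.1 (Fin.castAdd k2 a) : ℕ)) *
                  ((x a) ^ ((q.2.1 a : ℕ)) * (φp (x a) * Real.exp (-V (x a)))))) *
               (∏ b, ((y b) ^ ((q.1 (Fin.natAdd k1 b) : ℕ)) *
                  ((y b) ^ ((q.2.2 b : ℕ)) * (φm (y b) * Real.exp (-V (y b))))))) := by
      intro x y
      rw [vdm_expand (Fin.append x y), vdm_expand x, vdm_expand y]
      simp only [Finset.sum_mul, Finset.mul_sum, Fintype.sum_prod_type]
      conv_rhs => rw [← sum3_rev]
      refine Finset.sum_congr rfl fun τ _ => ?_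
      refine Finset.sum_congr rfl fun σ _ => ?_
      refine Finset.sum_congr rfl fun π _ => ?_
      rw [Fin.prod_univ_add (fun j => (Fin.append x y j) ^ ((π j : ℕ)))]
      simp only [Fin.append_left, Fin.append_right]
      simp only [Finset.prod_mul_distrib]
      ring
    have hinner : ∀ x : Fin k1 → ℝ,
        (∫ y, ∑ q : Perm (Fin (k1 + k2)) × Perm (Fin k1) × Perm (Fin k2),
            (((Perm.sign q.1 : ℤ) : ℝ) * (((Perm.sign q.2.1 : ℤ) : ℝ) * ((Perm.sign q.2.2 : ℤ) : ℝ))) *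
              ((∏ a, ((x a) ^ ((q.1 (Fin.castAdd k2 a) : ℕ)) *
                  ((x a) ^ ((q.2.1 a : ℕ)) * (φp (x a) * Real.exp (-V (x a)))))) *
               (∏ b, ((y b) ^ ((q.1 (Fin.natAdd k1 b) : ℕ)) *
                  ((y b) ^ ((q.2.2 b : ℕ)) * (φm (y b) * Real.exp (-V (y b)))))))
            ∂(Measure.pi fun _ : Fin k2 => μ))
        = ∑ q : Perm (Fin (k1 + k2)) × Perm (Fin k1) × Perm (Fin k2),
            (((Perm.sign q.1 : ℤ) : ℝ) * (((Perm.sign q.2.1 : ℤ) : ℝ) * ((Perm.sign q.2.2 : ℤ) : ℝ))) *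
              ((∏ a, ((x a) ^ ((q.1 (Fin.castAdd k2 a) : ℕ)) *
                  ((x a) ^ ((q.2.1 a : ℕ)) * (φp (x a) * Real.exp (-V (x a)))))) *
               (∏ b, C (q.1 (Fin.natAdd k1 b)) (Fin.natAdd k1 (q.2.2 b)))) := by
      intro x
      rw [integral_finset_sum _ (fun q _ =>
        ((integrable_pi_prod μ (fun b => hGb q b)).const_mul _).const_mul _)]
      refine Finset.sum_congr rfl fun q _ => ?_
      rw [integral_const_mul, integral_const_mul,
        integral_pi_prod μ (fun b => fun t => t ^ ((q.1 (Fin.natAdd k1 b) : ℕ)) *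
          (t ^ ((q.2.2 b : ℕ)) * (φm t * Real.exp (-V t))))]
      rw [Finset.prod_congr rfl fun b _ => hCm (q.1 (Fin.natAdd k1 b)) (q.2.2 b)]
    simp only [hrestrict]
    simp only [hfun2]
    simp only [hinner]
    rw [integral_finset_sum _ (fun q _ =>
      ((integrable_pi_prod μ (fun a => hFa q a)).mul_const _).const_mul _)]
    have hterm2 : ∀ q : Perm (Fin (k1 + k2)) × Perm (Fin k1) × Perm (Fin k2),
        (∫ x, (((Perm.sign q.1 : ℤ) : ℝ) * (((Perm.sign q.2.1 : ℤ) : ℝ) * ((Perm.sign q.2.2 : ℤ) : ℝ))) *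
            ((∏ a, ((x a) ^ ((q.1 (Fin.castAdd k2 a) : ℕ)) *
                ((x a) ^ ((q.2.1 a : ℕ)) * (φp (x a) * Real.exp (-V (x a)))))) *
             (∏ b, C (q.1 (Fin.natAdd k1 b)) (Fin.natAdd k1 (q.2.2 b))))
            ∂(Measure.pi fun _ : Fin k1 => μ))
        = (((Perm.sign q.1 : ℤ) : ℝ) * (((Perm.sign q.2.1 : ℤ) : ℝ) * ((Perm.sign q.2.2 : ℤ) : ℝ))) *
            ((∏ a, C (q.1 (Fin.castAdd k2 a)) (Fin.castAdd k2 (q.2.1 a))) *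
             (∏ b, C (q.1 (Fin.natAdd k1 b)) (Fin.natAdd k1 (q.2.2 b)))) := by
      intro q
      rw [integral_const_mul]
      congr 1
      rw [integral_mul_const,
        integral_pi_prod μ (fun a => fun t => t ^ ((q.1 (Fin.castAdd k2 a) : ℕ)) *
          (t ^ ((q.2.1 a : ℕ)) * (φp t * Real.exp (-V t))))]
      rw [Finset.prod_congr rfl fun a _ => hCp (q.1 (Fin.castAdd k2 a)) (q.2.1 a)]
    rw [Finset.sum_congr rfl fun q _ => hterm2 q]
    simp only [Fintype.sum_prod_type]
    exact collapse C
  rw [hL, hR]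
  have h1 : ((k1 + k2).factorial : ℝ) ≠ 0 := Nat.cast_ne_zero.mpr (Nat.factorial_ne_zero _)
  have h2 : ((k1.factorial : ℝ) * (k2.factorial : ℝ)) ≠ 0 :=
    mul_ne_zero (Nat.cast_ne_zero.mpr (Nat.factorial_ne_zero _))
      (Nat.cast_ne_zero.mpr (Nat.factorial_ne_zero _))
  field_simp

end
end

section
/- Let k ≥ 1, let μ be a measure on ℝ, and let F : ℝ^k → ℝ be a measurable skew-symmetric function, i.e. F(x_{σ(1)},…,x_{σ(k)}) = sgn(σ) F(x_1,…,x_k) for every permutation σ of {1,…,k}. Assume that for every permutation (a_1,…,a_k) of (0,1,…,k−1) the function x ↦ F(x) ∏_{i=1}^k x_i^{a_i} is integrable with respect to the product measure μ^{⊗k} on ℝ^k. Then ∫_{ℝ^k} F(x_1,…,x_k) · Δ_k(x) · ∏_{i=1}^k μ(dx_i) = k! ∫_{ℝ^k} F(x_1,…,x_k) · ∏_{i=1}^k x_i^{i−1} · μ(dx_i). -/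
/-!
Expanding `Δ_k(x) = det (x_i ^ j)` by the Leibniz formula gives `∑_σ sgn σ ∏_i x_i ^ σ(i)`.
The product measure `μ^{⊗k}` is invariant under permuting coordinates, so substituting
`x ↦ x ∘ σ` and using skew-symmetry of `F` turns the `σ`-term into
`sgn σ · sgn σ · ∫ F(x) ∏_i x_i ^ i = ∫ F(x) ∏_i x_i ^ i`; there are `k!` such terms.
-/

open MeasureTheory

noncomputable section

namespace MeasureTheory

variable {ι α : Type*} [Fintype ι]

theorem piPremeasure_image_comp_perm (m : OuterMeasure α) (σ : Equiv.Perm ι) (s : Set (ι → α)) :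
    piPremeasure (fun _ => m) ((· ∘ σ) '' s) = piPremeasure (fun _ => m) s := by
  have eval_image : ∀ i, Function.eval i '' ((· ∘ σ) '' s) = Function.eval (σ i) '' s := by
    intro i
    rw [Set.image_image]
    rfl
  simp only [piPremeasure, eval_image]
  exact Equiv.prod_comp σ fun j => m (Function.eval j '' s)

theorem OuterMeasure.pi_image_comp_perm (m : OuterMeasure α) (σ : Equiv.Perm ι)
    (s : Set (ι → α)) :
    OuterMeasure.pi (fun _ => m) ((· ∘ σ) '' s) = OuterMeasure.pi (fun _ => m) s := by
  have hsurj : Function.Surjective fun x : ι → α => x ∘ σ :=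
    fun y => ⟨y ∘ σ.symm, by simp [Function.comp_assoc]⟩
  have hcomap := OuterMeasure.comap_boundedBy (fun x : ι → α => x ∘ σ)
    (m := piPremeasure fun _ => m) (Or.inr hsurj)
  simp only [piPremeasure_image_comp_perm] at hcomap
  rw [← OuterMeasure.comap_apply]
  exact congrArg (· s) hcomap

variable [MeasurableSpace α]

/-- Unlike `measurePreserving_piCongrLeft`, this needs no σ-finiteness: the permutation invariance
already holds for the outer measure defining `Measure.pi`. -/
theorem measurePreserving_comp_perm (μ : Measure α) (σ : Equiv.Perm ι) :
    MeasurePreserving (fun x : ι → α => x ∘ σ) (Measure.pi fun _ => μ) (Measure.pi fun _ => μ) := by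
  set e := MeasurableEquiv.arrowCongr' σ.symm (MeasurableEquiv.refl α)
  refine ⟨e.measurable, Measure.ext fun s hs => ?_⟩
  change Measure.map e _ s = _
  rw [e.map_apply, Measure.pi_def, toMeasure_apply _ _ hs, toMeasure_apply _ _ (e.measurable hs),
    ← OuterMeasure.pi_image_comp_perm _ σ]
  exact congrArg _ (Set.image_preimage_eq s e.surjective)

theorem integral_comp_perm {E : Type*} [NormedAddCommGroup E] [NormedSpace ℝ E] (μ : Measure α)
    (σ : Equiv.Perm ι) (f : (ι → α) → E) :
    ∫ x, f (x ∘ σ) ∂(Measure.pi fun _ => μ) = ∫ x, f x ∂(Measure.pi fun _ => μ) :=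
  (measurePreserving_comp_perm μ σ).integral_comp'
    (f := MeasurableEquiv.arrowCongr' σ.symm (MeasurableEquiv.refl α)) f

end MeasureTheory

theorem vdm_eq_sum_sign_mul_prod_pow {m : ℕ} (x : Fin m → ℝ) :
    vdm x = ∑ σ : Equiv.Perm (Fin m), (Equiv.Perm.sign σ : ℝ) * ∏ i, x i ^ (σ i : ℕ) := by
  rw [vdm, ← Matrix.det_vandermonde, ← Matrix.det_transpose, Matrix.det_apply]
  simp [Matrix.vandermonde, Units.smul_def]

theorem integral_mul_prod_pow_perm_of_skew {k : ℕ} (μ : Measure ℝ) {F : (Fin k → ℝ) → ℝ}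
    (hskew : ∀ (σ : Equiv.Perm (Fin k)) (x : Fin k → ℝ),
      F (x ∘ σ) = (Equiv.Perm.sign σ : ℤ) * F x) (σ : Equiv.Perm (Fin k)) :
    ∫ x, F x * ∏ i, x i ^ (σ i : ℕ) ∂(Measure.pi fun _ => μ)
      = Equiv.Perm.sign σ * ∫ x, F x * ∏ i, x i ^ (i : ℕ) ∂(Measure.pi fun _ => μ) := by
  rw [← integral_comp_perm μ σ, ← integral_const_mul]
  congr 1 with x
  rw [hskew, ← Equiv.prod_comp σ fun i => x i ^ (i : ℕ)]
  simp only [Function.comp_apply]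
  ring

theorem statement3_general {k : ℕ} (μ : Measure ℝ)
    (F : (Fin k → ℝ) → ℝ)
    (hskew : ∀ (σ : Equiv.Perm (Fin k)) (x : Fin k → ℝ),
      F (x ∘ σ) = (Equiv.Perm.sign σ : ℤ) * F x)
    (hint : ∀ σ : Equiv.Perm (Fin k),
      Integrable (fun x : Fin k → ℝ => F x * ∏ i, x i ^ ((σ i : ℕ)))
        (Measure.pi fun _ => μ)) :
    ∫ x, F x * vdm x ∂(Measure.pi fun _ : Fin k => μ)
      = (k.factorial : ℝ) *
        ∫ x, F x * ∏ i, x i ^ ((i : ℕ)) ∂(Measure.pi fun _ : Fin k => μ) := by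
  have sign_mul_self (σ : Equiv.Perm (Fin k)) :
      (Equiv.Perm.sign σ : ℝ) * Equiv.Perm.sign σ = 1 := by
    rw [← Int.cast_mul, ← Units.val_mul, Int.units_mul_self, Units.val_one, Int.cast_one]
  calc ∫ x, F x * vdm x ∂(Measure.pi fun _ => μ)
      = ∫ x, ∑ σ : Equiv.Perm (Fin k),
          Equiv.Perm.sign σ * (F x * ∏ i, x i ^ (σ i : ℕ)) ∂(Measure.pi fun _ => μ) := by
        congr 1 with x
        rw [vdm_eq_sum_sign_mul_prod_pow, Finset.mul_sum]
        simp only [mul_left_comm]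
    _ = ∑ σ : Equiv.Perm (Fin k), Equiv.Perm.sign σ *
          ∫ x, F x * ∏ i, x i ^ (σ i : ℕ) ∂(Measure.pi fun _ => μ) := by
        rw [integral_finsetSum _ fun σ _ => (hint σ).const_mul _]
        simp only [integral_const_mul]
    _ = (k.factorial : ℝ) * ∫ x, F x * ∏ i, x i ^ (i : ℕ) ∂(Measure.pi fun _ => μ) := by
        simp_rw [integral_mul_prod_pow_perm_of_skew μ hskew, ← mul_assoc, sign_mul_self, one_mul,
          Finset.sum_const, Finset.card_univ, Fintype.card_perm, Fintype.card_fin, nsmul_eq_mul]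

/-- For a skew-symmetric integrable `F : ℝ^k → ℝ`,
`∫ F(x) Δ_k(x) ∏ μ(dx_i) = k! ∫ F(x) ∏ x_i^{i-1} μ(dx_i)`. -/
theorem statement3 {k : ℕ} (hk : 1 ≤ k) (μ : Measure ℝ)
    (F : (Fin k → ℝ) → ℝ) (hFmeas : Measurable F)
    (hskew : ∀ (σ : Equiv.Perm (Fin k)) (x : Fin k → ℝ),
      F (x ∘ σ) = (Equiv.Perm.sign σ : ℤ) * F x)
    (hint : ∀ σ : Equiv.Perm (Fin k),
      Integrable (fun x : Fin k → ℝ => F x * ∏ i, x i ^ ((σ i : ℕ)))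
        (Measure.pi fun _ => μ)) :
    ∫ x, F x * vdm x ∂(Measure.pi fun _ : Fin k => μ)
      = (k.factorial : ℝ) *
        ∫ x, F x * ∏ i, x i ^ ((i : ℕ)) ∂(Measure.pi fun _ : Fin k => μ) :=
  statement3_general μ F hskew hint

end
end

section
/- With f := log τ, where τ(t1,t2,s1,s2,u1,u2; a; b_1,…,b_{2r}) := (1/(k1!k2!)) ∫_{E^{k1}×E^{k2}} Δ_n(x,y)·Δ_{k1}(x)·Δ_{k2}(y)·∏_{j=1}^{k1} e^{−x_j²/2 + a x_j + (t1−s1)x_j + (t2−s2)x_j²} dx_j · ∏_{j=1}^{k2} e^{−y_j²/2 − a y_j + (t1−u1)y_j + (t2−u2)y_j²} dy_j and E = ⋃_{i=1}^r [b_{2i−1},b_{2i}] with b_1 < … < b_{2r}, assuming τ > 0 at t1=t2=s1=s2=u1=u2=0: the following Virasoro constraint holds at t1=t2=s1=s2=u1=u2=0, as an identity in (a, b_1,…,b_{2r}): ∂f/∂t1 = − Σ_{i=1}^{2r} ∂f/∂b_i + a(k1 − k2). -/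
open MeasureTheory

noncomputable section

/-- `E = ⋃_{i=1}^r [b_{2i-1}, b_{2i}]`. -/
def Eset (r : ℕ) (b : Fin (2 * r) → ℝ) : Set ℝ :=
  ⋃ i : Fin r, Set.Icc (b ⟨2 * (i : ℕ), by have := i.isLt; omega⟩)
    (b ⟨2 * (i : ℕ) + 1, by have := i.isLt; omega⟩)

/-- The deformed tau function
`τ(t1,t2,s1,s2,u1,u2;a;b) = (1/(k1!k2!)) ∫_{E^{k1}×E^{k2}} Δ_n(x,y) Δ_{k1}(x) Δ_{k2}(y)
∏ e^{-x_j²/2+ax_j+(t1-s1)x_j+(t2-s2)x_j²} dx ∏ e^{-y_j²/2-ay_j+(t1-u1)y_j+(t2-u2)y_j²} dy`. -/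
def tau6 (k1 k2 r : ℕ) (t1 t2 s1 s2 u1 u2 a : ℝ) (b : Fin (2 * r) → ℝ) : ℝ :=
  (1 / ((k1.factorial : ℝ) * (k2.factorial : ℝ))) *
    ∫ x in Set.univ.pi (fun _ : Fin k1 => Eset r b),
      ∫ y in Set.univ.pi (fun _ : Fin k2 => Eset r b),
        vdm (Fin.append x y) * vdm x * vdm y *
          ((∏ j, Real.exp (-(x j) ^ 2 / 2 + a * x j + (t1 - s1) * x j + (t2 - s2) * (x j) ^ 2)) *
            ∏ j, Real.exp (-(y j) ^ 2 / 2 - a * y j + (t1 - u1) * y j + (t2 - u2) * (y j) ^ 2))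

namespace S8


/-- Gaussian-type weight. -/
def wt (c x : ℝ) : ℝ := Real.exp (-x ^ 2 / 2 + c * x)

lemma continuous_mono_wt (p : ℕ) (c : ℝ) : Continuous fun x : ℝ => x ^ p * wt c x := by
  unfold wt; fun_prop

lemma measurableSet_Eset (r : ℕ) (b : Fin (2 * r) → ℝ) : MeasurableSet (Eset r b) :=
  MeasurableSet.iUnion fun _ => measurableSet_Icc

lemma isCompact_Eset (r : ℕ) (b : Fin (2 * r) → ℝ) : IsCompact (Eset r b) :=
  isCompact_iUnion fun _ => isCompact_Icc

/-- Factorization of an integral of a product over a pi set. -/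
lemma pi_setIntegral_prod {k : ℕ} {S : Set ℝ} (hS : MeasurableSet S) (f : Fin k → ℝ → ℝ) :
    ∫ x in Set.univ.pi (fun _ : Fin k => S), (∏ j, f j (x j)) = ∏ j, ∫ z in S, f j z := by
  rw [← integral_indicator (MeasurableSet.univ_pi fun _ => hS)]
  have h : ∀ x : Fin k → ℝ,
      (Set.univ.pi fun _ : Fin k => S).indicator (fun x => ∏ j, f j (x j)) x
        = ∏ j, S.indicator (f j) (x j) := by
    intro x
    by_cases hx : ∀ j, x j ∈ S
    · rw [Set.indicator_of_mem (by simpa [Set.mem_univ_pi] using hx)]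
      exact Finset.prod_congr rfl fun j _ => (Set.indicator_of_mem (hx j) _).symm
    · push_neg at hx
      obtain ⟨j, hj⟩ := hx
      rw [Set.indicator_of_notMem (by simp [Set.mem_univ_pi]; exact ⟨j, hj⟩)]
      exact (Finset.prod_eq_zero (Finset.mem_univ j) (Set.indicator_of_notMem hj _)).symm
  simp_rw [h]
  rw [volume_pi, MeasureTheory.integral_fintype_prod_eq_prod (fun j => S.indicator (f j))]
  exact Finset.prod_congr rfl fun j _ => integral_indicator hS



/-- The Vandermonde polynomial. -/
def vdmPoly (m : ℕ) : MvPolynomial (Fin m) ℝ :=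
  ∏ i : Fin m, ∏ j ∈ Finset.Ioi i, (MvPolynomial.X j - MvPolynomial.X i)

lemma eval_vdmPoly {m : ℕ} (z : Fin m → ℝ) : MvPolynomial.eval z (vdmPoly m) = vdm z := by
  simp [vdmPoly, vdm]

/-- The polynomial `Δ_n(x,y) Δ_{k1}(x) Δ_{k2}(y)` in variables `Fin k1 ⊕ Fin k2`. -/
def bigPoly (k1 k2 : ℕ) : MvPolynomial (Fin k1 ⊕ Fin k2) ℝ :=
  (MvPolynomial.rename (finSumFinEquiv (m := k1) (n := k2)).symm (vdmPoly (k1 + k2)))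
    * MvPolynomial.rename Sum.inl (vdmPoly k1) * MvPolynomial.rename Sum.inr (vdmPoly k2)

lemma elim_comp_equiv {k1 k2 : ℕ} (x : Fin k1 → ℝ) (y : Fin k2 → ℝ) :
    (Sum.elim x y ∘ (finSumFinEquiv (m := k1) (n := k2)).symm) = Fin.append x y := by
  funext i
  refine Fin.addCases (fun j => ?_) (fun j => ?_) i
  · simp [finSumFinEquiv_symm_apply_castAdd]
  · simp [finSumFinEquiv_symm_apply_natAdd]

lemma eval_bigPoly {k1 k2 : ℕ} (x : Fin k1 → ℝ) (y : Fin k2 → ℝ) :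
    MvPolynomial.eval (Sum.elim x y) (bigPoly k1 k2)
      = vdm (Fin.append x y) * vdm x * vdm y := by
  simp only [bigPoly, map_mul, MvPolynomial.eval_rename, elim_comp_equiv,
    Sum.elim_comp_inl, Sum.elim_comp_inr, eval_vdmPoly]

/-- Monomial expansion of the full integrand. -/
lemma integrand_expand {k1 k2 : ℕ} (c1 c2 : ℝ) (x : Fin k1 → ℝ) (y : Fin k2 → ℝ) :
    vdm (Fin.append x y) * vdm x * vdm y * ((∏ j, wt c1 (x j)) * ∏ j, wt c2 (y j))
      = ∑ d ∈ (bigPoly k1 k2).support, ((bigPoly k1 k2).coeff d *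
          ∏ j, (x j ^ d (Sum.inl j) * wt c1 (x j))) *
            ∏ j, (y j ^ d (Sum.inr j) * wt c2 (y j)) := by
  rw [← eval_bigPoly, MvPolynomial.eval_eq', Finset.sum_mul]
  refine Finset.sum_congr rfl fun d _ => ?_
  rw [Fintype.prod_sum_type]
  simp only [Sum.elim_inl, Sum.elim_inr, Finset.prod_mul_distrib]
  ring



/-- 1-D moment integrals over `Eset`. -/
def Jint (r p : ℕ) (c : ℝ) (b : Fin (2 * r) → ℝ) : ℝ :=
  ∫ z in Eset r b, z ^ p * wt c z

/-- Explicit factorized form of the tau function. -/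
def tauExp (k1 k2 r : ℕ) (t a : ℝ) (b : Fin (2 * r) → ℝ) : ℝ :=
  (1 / ((k1.factorial : ℝ) * (k2.factorial : ℝ))) * ∑ d ∈ (bigPoly k1 k2).support,
    ((bigPoly k1 k2).coeff d * ∏ j, Jint r (d (Sum.inl j)) (a + t) b) *
      ∏ j, Jint r (d (Sum.inr j)) (t - a) b

lemma integrableOn_pi_prod {k r : ℕ} (b : Fin (2 * r) → ℝ) (f : Fin k → ℝ → ℝ)
    (hf : ∀ j, Continuous (f j)) :
    IntegrableOn (fun y : Fin k → ℝ => ∏ j, f j (y j))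
      (Set.univ.pi fun _ : Fin k => Eset r b) volume := by
  refine (Continuous.continuousOn ?_).integrableOn_compact
    (isCompact_univ_pi fun _ => isCompact_Eset r b)
  exact continuous_finset_prod _ fun j _ => (hf j).comp (continuous_apply j)

lemma tau6_eq_tauExp (k1 k2 r : ℕ) (t a : ℝ) (b : Fin (2 * r) → ℝ) :
    tau6 k1 k2 r t 0 0 0 0 0 a b = tauExp k1 k2 r t a b := by
  unfold tau6 tauExp
  congr 1
  have hx : ∀ u : ℝ, Real.exp (-u ^ 2 / 2 + a * u + (t - 0) * u + (0 - 0) * u ^ 2)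
      = wt (a + t) u := by intro u; unfold wt; congr 1; ring
  have hy : ∀ u : ℝ, Real.exp (-u ^ 2 / 2 - a * u + (t - 0) * u + (0 - 0) * u ^ 2)
      = wt (t - a) u := by intro u; unfold wt; congr 1; ring
  simp only [hx, hy]
  simp only [integrand_expand (a + t) (t - a)]
  have hinner : ∀ x : Fin k1 → ℝ,
      (∫ y in Set.univ.pi (fun _ : Fin k2 => Eset r b),
        ∑ d ∈ (bigPoly k1 k2).support, ((bigPoly k1 k2).coeff d *
          ∏ j, (x j ^ d (Sum.inl j) * wt (a + t) (x j))) *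
            ∏ j, (y j ^ d (Sum.inr j) * wt (t - a) (y j)))
      = ∑ d ∈ (bigPoly k1 k2).support, ((bigPoly k1 k2).coeff d *
          ∏ j, (x j ^ d (Sum.inl j) * wt (a + t) (x j))) *
            ∏ j, Jint r (d (Sum.inr j)) (t - a) b := by
    intro x
    rw [integral_finset_sum]
    · refine Finset.sum_congr rfl fun d _ => ?_
      rw [integral_const_mul, pi_setIntegral_prod (measurableSet_Eset r b)
        (fun j u => u ^ d (Sum.inr j) * wt (t - a) u)]
      rfl
    · intro d _
      exact (integrableOn_pi_prod b _ fun j => continuous_mono_wt _ _).const_mul _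
  simp only [hinner]
  rw [integral_finset_sum]
  · refine Finset.sum_congr rfl fun d _ => ?_
    have : (fun x : Fin k1 → ℝ => ((bigPoly k1 k2).coeff d *
        ∏ j, (x j ^ d (Sum.inl j) * wt (a + t) (x j))) *
          ∏ j, Jint r (d (Sum.inr j)) (t - a) b)
        = fun x : Fin k1 → ℝ => ((bigPoly k1 k2).coeff d *
            (∏ j, Jint r (d (Sum.inr j)) (t - a) b)) *
          ∏ j, (x j ^ d (Sum.inl j) * wt (a + t) (x j)) := by
      funext x; ring
    rw [this, integral_const_mul, pi_setIntegral_prod (measurableSet_Eset r b)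
      (fun j u => u ^ d (Sum.inl j) * wt (a + t) u)]
    unfold Jint
    ring
  · intro d _
    have : (fun x : Fin k1 → ℝ => ((bigPoly k1 k2).coeff d *
        ∏ j, (x j ^ d (Sum.inl j) * wt (a + t) (x j))) *
          ∏ j, Jint r (d (Sum.inr j)) (t - a) b)
        = fun x : Fin k1 → ℝ => ((bigPoly k1 k2).coeff d *
            (∏ j, Jint r (d (Sum.inr j)) (t - a) b)) *
          ∏ j, (x j ^ d (Sum.inl j) * wt (a + t) (x j)) := by
      funext x; ring
    rw [this]
    exact (integrableOn_pi_prod b _ fun j => continuous_mono_wt _ _).const_mul _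



lemma vdm_shift {m : ℕ} (z : Fin m → ℝ) (ε : ℝ) : vdm (fun i => z i + ε) = vdm z :=
  Finset.prod_congr rfl fun i _ => Finset.prod_congr rfl fun j _ => by ring

lemma append_shift {k1 k2 : ℕ} (x : Fin k1 → ℝ) (y : Fin k2 → ℝ) (ε : ℝ) :
    Fin.append (fun j => x j + ε) (fun j => y j + ε) = fun i => Fin.append x y i + ε := by
  funext i
  refine Fin.addCases (fun j => ?_) (fun j => ?_) i <;> simp

lemma mem_Eset_add {r : ℕ} (b : Fin (2 * r) → ℝ) (ε z : ℝ) :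
    z + ε ∈ Eset r (fun i => b i + ε) ↔ z ∈ Eset r b := by
  simp only [Eset, Set.mem_iUnion, Set.mem_Icc]
  constructor <;> rintro ⟨i, h1, h2⟩ <;> exact ⟨i, by linarith, by linarith⟩

lemma pi_setIntegral_translate {k : ℕ} {S S' : Set ℝ} (hS : MeasurableSet S)
    (hS' : MeasurableSet S') (ε : ℝ) (h : ∀ z : ℝ, z + ε ∈ S' ↔ z ∈ S)
    (F : (Fin k → ℝ) → ℝ) :
    ∫ x in Set.univ.pi (fun _ : Fin k => S'), F x
      = ∫ x in Set.univ.pi (fun _ : Fin k => S), F (fun j => x j + ε) := by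
  rw [← integral_indicator (MeasurableSet.univ_pi fun _ => hS'),
      ← integral_indicator (MeasurableSet.univ_pi fun _ => hS),
      ← MeasureTheory.integral_add_right_eq_self
        ((Set.univ.pi fun _ : Fin k => S').indicator F) (fun _ => ε)]
  congr 1
  funext x
  have hxc : (x + fun _ => ε) = fun j => x j + ε := rfl
  by_cases hx : ∀ j, x j ∈ S
  · have h1 : (x + fun _ => ε) ∈ Set.univ.pi fun _ : Fin k => S' :=
      Set.mem_univ_pi.2 fun j => (h (x j)).2 (hx j)
    have h2 : x ∈ Set.univ.pi fun _ : Fin k => S := Set.mem_univ_pi.2 hx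
    rw [Set.indicator_of_mem h1, Set.indicator_of_mem h2, hxc]
  · push_neg at hx
    obtain ⟨j, hj⟩ := hx
    have h1 : (x + fun _ => ε) ∉ Set.univ.pi fun _ : Fin k => S' := by
      intro hc
      exact hj ((h (x j)).1 (Set.mem_univ_pi.1 hc j))
    have h2 : x ∉ Set.univ.pi fun _ : Fin k => S := by
      intro hc
      exact hj (Set.mem_univ_pi.1 hc j)
    rw [Set.indicator_of_notMem h1, Set.indicator_of_notMem h2]

lemma tau6_translate (k1 k2 r : ℕ) (a ε : ℝ) (b : Fin (2 * r) → ℝ) :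
    tau6 k1 k2 r 0 0 0 0 0 0 a (fun i => b i + ε)
      = Real.exp ((k1 : ℝ) * (a * ε - ε ^ 2 / 2) - (k2 : ℝ) * (a * ε + ε ^ 2 / 2)) *
          tau6 k1 k2 r (-ε) 0 0 0 0 0 a b := by
  unfold tau6
  have hS := measurableSet_Eset r b
  have hS' := measurableSet_Eset r (fun i => b i + ε)
  have hmem := mem_Eset_add b ε
  rw [pi_setIntegral_translate hS hS' ε hmem]
  simp only [pi_setIntegral_translate hS hS' ε hmem]
  have key : ∀ (x : Fin k1 → ℝ) (y : Fin k2 → ℝ),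
      vdm (Fin.append (fun j => x j + ε) (fun j => y j + ε)) * vdm (fun j => x j + ε) *
          vdm (fun j => y j + ε) *
        ((∏ j, Real.exp (-(x j + ε) ^ 2 / 2 + a * (x j + ε) + (0 - 0) * (x j + ε) +
            (0 - 0) * (x j + ε) ^ 2)) *
          ∏ j, Real.exp (-(y j + ε) ^ 2 / 2 - a * (y j + ε) + (0 - 0) * (y j + ε) +
            (0 - 0) * (y j + ε) ^ 2))
      = Real.exp ((k1 : ℝ) * (a * ε - ε ^ 2 / 2) - (k2 : ℝ) * (a * ε + ε ^ 2 / 2)) *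
        (vdm (Fin.append x y) * vdm x * vdm y *
          ((∏ j, Real.exp (-(x j) ^ 2 / 2 + a * x j + (-ε - 0) * x j + (0 - 0) * (x j) ^ 2)) *
            ∏ j, Real.exp (-(y j) ^ 2 / 2 - a * y j + (-ε - 0) * y j + (0 - 0) * (y j) ^ 2))) := by
    intro x y
    rw [append_shift, vdm_shift, vdm_shift, vdm_shift]
    have hx : ∀ u : ℝ, Real.exp (-(u + ε) ^ 2 / 2 + a * (u + ε) + (0 - 0) * (u + ε) +
        (0 - 0) * (u + ε) ^ 2)
        = Real.exp (a * ε - ε ^ 2 / 2) *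
            Real.exp (-u ^ 2 / 2 + a * u + (-ε - 0) * u + (0 - 0) * u ^ 2) := by
      intro u; rw [← Real.exp_add]; congr 1; ring
    have hy : ∀ u : ℝ, Real.exp (-(u + ε) ^ 2 / 2 - a * (u + ε) + (0 - 0) * (u + ε) +
        (0 - 0) * (u + ε) ^ 2)
        = Real.exp (-(a * ε) - ε ^ 2 / 2) *
            Real.exp (-u ^ 2 / 2 - a * u + (-ε - 0) * u + (0 - 0) * u ^ 2) := by
      intro u; rw [← Real.exp_add]; congr 1; ring
    simp only [hx, hy, Finset.prod_mul_distrib, Finset.prod_const, Finset.card_univ,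
      Fintype.card_fin]
    rw [← Real.exp_nat_mul, ← Real.exp_nat_mul,
      show Real.exp ((k1 : ℝ) * (a * ε - ε ^ 2 / 2) - (k2 : ℝ) * (a * ε + ε ^ 2 / 2))
          = Real.exp ((k1 : ℝ) * (a * ε - ε ^ 2 / 2)) *
              Real.exp ((k2 : ℝ) * (-(a * ε) - ε ^ 2 / 2)) from by
        rw [← Real.exp_add]; congr 1; ring]
    ring
  simp only [key, integral_const_mul]
  ring


/-- Antiderivative of the weighted monomial. -/
def Gint (p : ℕ) (c x : ℝ) : ℝ := ∫ t in (0 : ℝ)..x, t ^ p * wt c t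

lemma hasDerivAt_Gint (p : ℕ) (c x : ℝ) :
    HasDerivAt (Gint p c) (x ^ p * wt c x) x :=
  ((continuous_mono_wt p c).integral_hasStrictDerivAt 0 x).hasDerivAt

/-- Explicit local form of `Jint`. -/
def JExp (r p : ℕ) (c : ℝ) (b : Fin (2 * r) → ℝ) : ℝ :=
  ∑ i : Fin r, (Gint p c (b ⟨2 * (i : ℕ) + 1, by have := i.isLt; omega⟩)
    - Gint p c (b ⟨2 * (i : ℕ), by have := i.isLt; omega⟩))

lemma Jint_eq_JExp {r : ℕ} (p : ℕ) (c : ℝ) {b : Fin (2 * r) → ℝ} (hb : StrictMono b) :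
    Jint r p c b = JExp r p c b := by
  unfold Jint JExp Eset
  rw [integral_iUnion (fun _ => measurableSet_Icc) ?hd ?hi, tsum_fintype]
  case hd =>
    have key : ∀ i j : Fin r, i < j →
        Disjoint (Set.Icc (b ⟨2 * (i : ℕ), by have := i.isLt; omega⟩)
            (b ⟨2 * (i : ℕ) + 1, by have := i.isLt; omega⟩))
          (Set.Icc (b ⟨2 * (j : ℕ), by have := j.isLt; omega⟩)
            (b ⟨2 * (j : ℕ) + 1, by have := j.isLt; omega⟩)) := by
      intro i j hij
      refine Set.disjoint_left.2 fun z hz1 hz2 => ?_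
      have hkey : b ⟨2 * (i : ℕ) + 1, by have := i.isLt; omega⟩
          < b ⟨2 * (j : ℕ), by have := j.isLt; omega⟩ := by
        apply hb
        simp only [Fin.mk_lt_mk]
        have : (i : ℕ) < (j : ℕ) := hij
        omega
      have := hz1.2
      have := hz2.1
      linarith
    intro i j hij
    rcases lt_or_gt_of_ne hij with hlt | hlt
    · exact key i j hlt
    · exact (key j i hlt).symm
  case hi =>
    exact ((continuous_mono_wt p c).continuousOn).integrableOn_compact
      (isCompact_iUnion fun _ => isCompact_Icc)
  refine Finset.sum_congr rfl fun i _ => ?_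
  set l := b ⟨2 * (i : ℕ), by have := i.isLt; omega⟩ with hl
  set u := b ⟨2 * (i : ℕ) + 1, by have := i.isLt; omega⟩ with hu
  have hle : l ≤ u := by
    refine (hb ?_).le
    simp only [Fin.mk_lt_mk]
    omega
  rw [integral_Icc_eq_integral_Ioc, ← intervalIntegral.integral_of_le hle]
  have h0l := (continuous_mono_wt p c).intervalIntegrable (μ := volume) 0 l
  have hlu := (continuous_mono_wt p c).intervalIntegrable (μ := volume) l u
  have hadd := intervalIntegral.integral_add_adjacent_intervals h0l hlu
  unfold Gint
  linarith


lemma eventually_strictMono {m : ℕ} {b : Fin m → ℝ} (hb : StrictMono b) :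
    ∀ᶠ v in nhds b, StrictMono v := by
  have h : ∀ i j : Fin m, i < j → ∀ᶠ v in nhds b, v i < v j := fun i j hij =>
    (isOpen_lt (continuous_apply i) (continuous_apply j)).mem_nhds (hb hij)
  have h2 : ∀ᶠ v in nhds b, ∀ i j : Fin m, i < j → v i < v j := by
    rw [Filter.eventually_all]
    intro i
    rw [Filter.eventually_all]
    intro j
    by_cases hij : i < j
    · filter_upwards [h i j hij] with v hv
      exact fun _ => hv
    · exact Filter.Eventually.of_forall fun v h' => absurd h' hij
  filter_upwards [h2] with v hv
  exact fun i j hij => hv i j hij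

lemma diffAt_apply {m : ℕ} (i : Fin m) (b : Fin m → ℝ) :
    DifferentiableAt ℝ (fun v : Fin m → ℝ => v i) b :=
  (ContinuousLinearMap.proj (R := ℝ) (φ := fun _ : Fin m => ℝ) i).differentiable.differentiableAt

lemma diffAt_JExp (r p : ℕ) (c : ℝ) (b : Fin (2 * r) → ℝ) :
    DifferentiableAt ℝ (JExp r p c) b := by
  refine DifferentiableAt.fun_sum fun i _ => DifferentiableAt.sub ?_ ?_ <;>
  exact ((hasDerivAt_Gint p c _).differentiableAt).comp b (diffAt_apply _ b)

lemma diffAt_prod {ι : Type*} {E : Type*} [NormedAddCommGroup E] [NormedSpace ℝ E]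
    (s : Finset ι) (f : ι → E → ℝ) (x : E) (hf : ∀ j ∈ s, DifferentiableAt ℝ (f j) x) :
    DifferentiableAt ℝ (fun v => ∏ j ∈ s, f j v) x := by
  classical
  induction s using Finset.induction_on with
  | empty => simpa using differentiableAt_const (1 : ℝ)
  | insert _ _ h ih =>
      simp only [Finset.prod_insert h]
      exact (hf _ (Finset.mem_insert_self _ _)).mul
        (ih fun j hj => hf j (Finset.mem_insert_of_mem hj))

end S8

/-- Virasoro constraint at `t1=t2=s1=s2=u1=u2=0`:
`∂f/∂t1 = -Σ_i ∂f/∂b_i + a(k1-k2)` where `f = log τ`. -/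
theorem statement8 (k1 k2 r : ℕ) (hn : 1 ≤ k1 + k2) (hr : 1 ≤ r)
    (a : ℝ) (b : Fin (2 * r) → ℝ) (hb : StrictMono b)
    (hpos : 0 < tau6 k1 k2 r 0 0 0 0 0 0 a b) :
    deriv (fun t1 => Real.log (tau6 k1 k2 r t1 0 0 0 0 0 a b)) 0
      = -(∑ i : Fin (2 * r),
            deriv (fun s => Real.log (tau6 k1 k2 r 0 0 0 0 0 0 a (Function.update b i s))) (b i))
        + a * ((k1 : ℝ) - (k2 : ℝ)) := by
  classical
  have T : (Fin (2 * r) → ℝ) → ℝ := fun v => tau6 k1 k2 r 0 0 0 0 0 0 a v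
  -- differentiability of `v ↦ tau6 … v` at `b`
  have hTdiff : DifferentiableAt ℝ (fun v => tau6 k1 k2 r 0 0 0 0 0 0 a v) b := by
    have he2 : (fun v => tau6 k1 k2 r 0 0 0 0 0 0 a v) =ᶠ[nhds b] (fun v =>
        (1 / ((k1.factorial : ℝ) * (k2.factorial : ℝ))) * ∑ d ∈ (S8.bigPoly k1 k2).support,
          ((S8.bigPoly k1 k2).coeff d * ∏ j, S8.JExp r (d (Sum.inl j)) (a + 0) v) *
            ∏ j, S8.JExp r (d (Sum.inr j)) (0 - a) v) := by
      filter_upwards [S8.eventually_strictMono hb] with v hv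
      rw [S8.tau6_eq_tauExp k1 k2 r 0 a v]
      unfold S8.tauExp
      simp_rw [S8.Jint_eq_JExp _ _ hv]
    refine (Filter.EventuallyEq.differentiableAt_iff he2).2 ?_
    refine DifferentiableAt.const_mul (DifferentiableAt.fun_sum fun d _ => ?_) _
    exact ((S8.diffAt_prod Finset.univ _ b fun j _ => S8.diffAt_JExp r _ _ b).const_mul _).mul
      (S8.diffAt_prod Finset.univ _ b fun j _ => S8.diffAt_JExp r _ _ b)
  set D : (Fin (2 * r) → ℝ) →L[ℝ] ℝ := fderiv ℝ (fun v => tau6 k1 k2 r 0 0 0 0 0 0 a v) b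
    with hDdef
  have hD : HasFDerivAt (fun v => tau6 k1 k2 r 0 0 0 0 0 0 a v) D b := hTdiff.hasFDerivAt
  have cneg : Fin (2 * r) → ℝ := fun _ => (-1 : ℝ)
  -- LHS
  have hfun : (fun t => Real.log (tau6 k1 k2 r t 0 0 0 0 0 a b))
      = fun t => Real.log (Real.exp (a * ((k1 : ℝ) - (k2 : ℝ)) * t
          + ((k1 : ℝ) + (k2 : ℝ)) * t ^ 2 / 2)
        * tau6 k1 k2 r 0 0 0 0 0 0 a (b + t • fun _ => (-1 : ℝ))) := by
    funext t
    congr 1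
    have h := S8.tau6_translate k1 k2 r a (-t) b
    have hfb : (fun i => b i + -t) = b + t • fun _ => (-1 : ℝ) := by
      funext i
      simp only [Pi.add_apply, Pi.smul_apply, smul_eq_mul]
      ring
    rw [hfb, neg_neg] at h
    rw [h, ← mul_assoc, ← Real.exp_add,
      show (a * ((k1 : ℝ) - (k2 : ℝ)) * t + ((k1 : ℝ) + (k2 : ℝ)) * t ^ 2 / 2)
          + ((k1 : ℝ) * (a * -t - (-t) ^ 2 / 2) - (k2 : ℝ) * (a * -t + (-t) ^ 2 / 2)) = 0
        from by ring, Real.exp_zero, one_mul]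
  have hq : HasDerivAt (fun t : ℝ => a * ((k1 : ℝ) - (k2 : ℝ)) * t
      + ((k1 : ℝ) + (k2 : ℝ)) * t ^ 2 / 2) (a * ((k1 : ℝ) - (k2 : ℝ))) 0 := by
    have h1 : HasDerivAt (fun t : ℝ => a * ((k1 : ℝ) - (k2 : ℝ)) * t)
        (a * ((k1 : ℝ) - (k2 : ℝ))) 0 := by
      simpa using (hasDerivAt_id (0 : ℝ)).const_mul (a * ((k1 : ℝ) - (k2 : ℝ)))
    have h2 : HasDerivAt (fun t : ℝ => ((k1 : ℝ) + (k2 : ℝ)) * t ^ 2 / 2) 0 0 := by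
      simpa using ((hasDerivAt_pow 2 (0 : ℝ)).const_mul ((k1 : ℝ) + (k2 : ℝ))).div_const 2
    simpa using h1.fun_add h2
  have hφ : HasDerivAt (fun t : ℝ => b + t • fun _ : Fin (2 * r) => (-1 : ℝ))
      (fun _ => (-1 : ℝ)) 0 := by
    simpa using ((hasDerivAt_id (0 : ℝ)).smul_const (fun _ : Fin (2 * r) => (-1 : ℝ))).const_add b
  have hD0 : HasFDerivAt (fun v => tau6 k1 k2 r 0 0 0 0 0 0 a v) D
      (b + (0 : ℝ) • fun _ : Fin (2 * r) => (-1 : ℝ)) := by simpa using hD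
  have hTc : HasDerivAt (fun t : ℝ => tau6 k1 k2 r 0 0 0 0 0 0 a
      (b + t • fun _ => (-1 : ℝ))) (D fun _ => (-1 : ℝ)) 0 := by have := hD0.comp_hasDerivAt 0 hφ; exact this
  have hS : HasDerivAt (fun t : ℝ => Real.exp (a * ((k1 : ℝ) - (k2 : ℝ)) * t
      + ((k1 : ℝ) + (k2 : ℝ)) * t ^ 2 / 2)
      * tau6 k1 k2 r 0 0 0 0 0 0 a (b + t • fun _ => (-1 : ℝ)))
      (a * ((k1 : ℝ) - (k2 : ℝ)) * tau6 k1 k2 r 0 0 0 0 0 0 a b + D fun _ => (-1 : ℝ)) 0 := by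
    have h := (hq.exp).fun_mul hTc
    norm_num at h
    convert h using 1
  have hSne : Real.exp (a * ((k1 : ℝ) - (k2 : ℝ)) * (0:ℝ)
      + ((k1 : ℝ) + (k2 : ℝ)) * (0:ℝ) ^ 2 / 2)
      * tau6 k1 k2 r 0 0 0 0 0 0 a (b + (0:ℝ) • fun _ => (-1 : ℝ)) ≠ 0 := by
    norm_num
    simpa using hpos.ne'
  have hlogS := hS.log hSne
  have hLHS : deriv (fun t1 => Real.log (tau6 k1 k2 r t1 0 0 0 0 0 a b)) 0
      = (a * ((k1 : ℝ) - (k2 : ℝ)) * tau6 k1 k2 r 0 0 0 0 0 0 a b + D fun _ => (-1 : ℝ))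
          / tau6 k1 k2 r 0 0 0 0 0 0 a b := by
    rw [hfun, hlogS.deriv]
    norm_num
  -- RHS
  have hRHS : ∀ i : Fin (2 * r),
      deriv (fun s => Real.log (tau6 k1 k2 r 0 0 0 0 0 0 a (Function.update b i s))) (b i)
        = D (Pi.single i 1) / tau6 k1 k2 r 0 0 0 0 0 0 a b := by
    intro i
    set e : Fin (2 * r) → ℝ := Pi.single i (1 : ℝ) with he
    have hupd : ∀ s : ℝ, Function.update b i s = b + (s - b i) • e := by
      intro s; funext j
      rcases eq_or_ne j i with h | h
      · subst h
        simp only [Function.update_self, Pi.add_apply, Pi.smul_apply, he,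
          Pi.single_eq_same, smul_eq_mul]
        ring
      · simp [Function.update_of_ne h, he, Pi.single_eq_of_ne h]
    have hψ : HasDerivAt (fun s : ℝ => b + (s - b i) • e) e (b i) := by
      simpa using (((hasDerivAt_id (b i)).sub_const (b i)).smul_const e).const_add b
    have hDb : HasFDerivAt (fun v => tau6 k1 k2 r 0 0 0 0 0 0 a v) D
        (b + ((b i) - b i) • e) := by simpa using hD
    have hTci : HasDerivAt (fun s : ℝ => tau6 k1 k2 r 0 0 0 0 0 0 a
        (b + (s - b i) • e)) (D e) (b i) :=
      by have := hDb.comp_hasDerivAt _ hψ; exact this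
    have hne : tau6 k1 k2 r 0 0 0 0 0 0 a (b + ((b i) - b i) • e) ≠ 0 := by
      simpa using hpos.ne'
    have hlog := hTci.log hne
    have hfun2 : (fun s => Real.log (tau6 k1 k2 r 0 0 0 0 0 0 a (Function.update b i s)))
        = fun s => Real.log (tau6 k1 k2 r 0 0 0 0 0 0 a (b + (s - b i) • e)) := by
      funext s; rw [hupd s]
    rw [hfun2, hlog.deriv]
    congr 1
    simp
  have hone : ∑ i : Fin (2 * r), Pi.single i (1 : ℝ) = fun _ : Fin (2 * r) => (1 : ℝ) := by
    simpa using Finset.univ_sum_single (fun _ : Fin (2 * r) => (1 : ℝ))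
  have hcneg : D (fun _ : Fin (2 * r) => (-1 : ℝ)) = -D (fun _ : Fin (2 * r) => (1 : ℝ)) := by
    rw [show (fun _ : Fin (2 * r) => (-1 : ℝ)) = -(fun _ : Fin (2 * r) => (1 : ℝ)) from rfl,
      map_neg]
  rw [hLHS]
  simp_rw [hRHS]
  rw [← Finset.sum_div, ← map_sum, hone, hcneg]
  have hTbne : tau6 k1 k2 r 0 0 0 0 0 0 a b ≠ 0 := hpos.ne'
  field_simp
  ring

end
end

section
/- With f := log τ, where τ(t1,t2,s1,s2,u1,u2; a; b_1,…,b_{2r}) := (1/(k1!k2!)) ∫_{E^{k1}×E^{k2}} Δ_n(x,y)·Δ_{k1}(x)·Δ_{k2}(y)·∏_{j=1}^{k1} e^{−x_j²/2 + a x_j + (t1−s1)x_j + (t2−s2)x_j²} dx_j · ∏_{j=1}^{k2} e^{−y_j²/2 − a y_j + (t1−u1)y_j + (t2−u2)y_j²} dy_j and E = ⋃_{i=1}^r [b_{2i−1},b_{2i}] with b_1 < … < b_{2r}, assuming τ > 0 at t1=t2=s1=s2=u1=u2=0: the following Virasoro constraint holds at t1=t2=s1=s2=u1=u2=0, as an identity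 in (a, b_1,…,b_{2r}): ∂f/∂t2 = − Σ_{i=1}^{2r} b_i ∂f/∂b_i + a ∂f/∂a + k1² + k1k2 + k2². -/
open MeasureTheory

noncomputable section

namespace S10

open Set Filter

/-! ### Basic objects -/

variable {k1 k2 k r : ℕ}

/-- The product space. -/
abbrev ZZ (k1 k2 : ℕ) := (Fin k1 → ℝ) × (Fin k2 → ℝ)

/-- Product volume. -/
abbrev vv (k1 k2 : ℕ) : Measure (ZZ k1 k2) :=
  (volume : Measure (Fin k1 → ℝ)).prod (volume : Measure (Fin k2 → ℝ))

instance haar_vv : (vv k1 k2).IsAddHaarMeasure :=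
  Measure.prod.instIsAddHaarMeasure _ _

def loIdx (r : ℕ) (i : Fin r) : Fin (2 * r) := ⟨2 * (i : ℕ), by have := i.isLt; omega⟩
def hiIdx (r : ℕ) (i : Fin r) : Fin (2 * r) := ⟨2 * (i : ℕ) + 1, by have := i.isLt; omega⟩

lemma lo_lt_hi {b : Fin (2 * r) → ℝ} (hb : StrictMono b) (i : Fin r) :
    b (loIdx r i) < b (hiIdx r i) := by
  apply hb
  simp [loIdx, hiIdx, Fin.lt_def]

lemma Eset_eq (b : Fin (2 * r) → ℝ) :
    Eset r b = ⋃ i : Fin r, Icc (b (loIdx r i)) (b (hiIdx r i)) := rfl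

lemma measurableSet_Eset (b : Fin (2 * r) → ℝ) : MeasurableSet (Eset r b) :=
  MeasurableSet.iUnion fun _ => measurableSet_Icc

lemma isCompact_Eset (b : Fin (2 * r) → ℝ) : IsCompact (Eset r b) :=
  isCompact_iUnion fun _ => isCompact_Icc

/-- `E^k`. -/
def piE (k r : ℕ) (b : Fin (2 * r) → ℝ) : Set (Fin k → ℝ) :=
  univ.pi fun _ : Fin k => Eset r b

lemma measurableSet_piE (b : Fin (2 * r) → ℝ) : MeasurableSet (piE k r b) :=
  MeasurableSet.univ_pi fun _ => measurableSet_Eset b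

lemma isCompact_piE (b : Fin (2 * r) → ℝ) : IsCompact (piE k r b) :=
  isCompact_univ_pi fun _ => isCompact_Eset b

/-- `E^{k1} × E^{k2}` inside the product space. -/
def PP (k1 k2 r : ℕ) (b : Fin (2 * r) → ℝ) : Set (ZZ k1 k2) :=
  piE k1 r b ×ˢ piE k2 r b

lemma measurableSet_PP (b : Fin (2 * r) → ℝ) : MeasurableSet (PP k1 k2 r b) :=
  (measurableSet_piE b).prod (measurableSet_piE b)

lemma isCompact_PP (b : Fin (2 * r) → ℝ) : IsCompact (PP k1 k2 r b) :=
  (isCompact_piE b).prod (isCompact_piE b)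

/-- The integrand of `tau6` at `t1 = s1 = s2 = u1 = u2 = 0`, `t2 = c`. -/
def itg (k1 k2 : ℕ) (a c : ℝ) (z : ZZ k1 k2) : ℝ :=
  vdm (Fin.append z.1 z.2) * vdm z.1 * vdm z.2 *
    ((∏ j, Real.exp (-(z.1 j) ^ 2 / 2 + a * z.1 j + ((0:ℝ) - 0) * z.1 j + (c - 0) * (z.1 j) ^ 2)) *
      ∏ j, Real.exp (-(z.2 j) ^ 2 / 2 - a * z.2 j + ((0:ℝ) - 0) * z.2 j + (c - 0) * (z.2 j) ^ 2))

lemma contDiff_finset_prod {ι E : Type*} [NormedAddCommGroup E] [NormedSpace ℝ E] (s : Finset ι)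
    (f : ι → E → ℝ) (h : ∀ i ∈ s, ContDiff ℝ 1 (f i)) :
    ContDiff ℝ 1 fun x => ∏ i ∈ s, f i x := by
  classical
  induction s using Finset.induction_on with
  | empty => simpa using contDiff_const
  | @insert a s ha ih =>
    simp only [Finset.prod_insert ha]
    exact (h a (Finset.mem_insert_self a s)).mul (ih fun i hi => h i (Finset.mem_insert_of_mem hi))

lemma contDiff_finset_sum {ι E : Type*} [NormedAddCommGroup E] [NormedSpace ℝ E] (s : Finset ι)
    (f : ι → E → ℝ) (h : ∀ i ∈ s, ContDiff ℝ 1 (f i)) :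
    ContDiff ℝ 1 fun x => ∑ i ∈ s, f i x := by
  classical
  induction s using Finset.induction_on with
  | empty => simpa using contDiff_const
  | @insert a s ha ih =>
    simp only [Finset.sum_insert ha]
    exact (h a (Finset.mem_insert_self a s)).add (ih fun i hi => h i (Finset.mem_insert_of_mem hi))

lemma contDiff_vdm {m : ℕ} : ContDiff ℝ 1 (fun z : Fin m → ℝ => vdm z) := by
  unfold vdm
  refine contDiff_finset_prod _ _ fun i _ => contDiff_finset_prod _ _ fun j _ => ?_
  fun_prop

lemma contDiff_append : ContDiff ℝ 1 (fun z : ZZ k1 k2 => Fin.append z.1 z.2) := by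
  rw [contDiff_pi]
  intro i
  induction i using Fin.addCases with
  | left i' =>
    simp only [Fin.append_left]
    fun_prop
  | right i' =>
    simp only [Fin.append_right]
    fun_prop

lemma contDiff_itg' {E : Type*} [NormedAddCommGroup E] [NormedSpace ℝ E]
    {f cf : E → ℝ} {g : E → Fin k1 → ℝ} {h : E → Fin k2 → ℝ}
    (hf : ContDiff ℝ 1 f) (hcf : ContDiff ℝ 1 cf) (hg : ContDiff ℝ 1 g)
    (hh : ContDiff ℝ 1 h) :
    ContDiff ℝ 1 (fun e => itg k1 k2 (f e) (cf e) (g e, h e)) := by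
  have hrw : (fun e => itg k1 k2 (f e) (cf e) (g e, h e)) =
      fun e =>
        vdm (Fin.append (g e) (h e)) * vdm (g e) * vdm (h e) *
          (Real.exp (∑ j, (-(g e j) ^ 2 / 2 + f e * g e j + ((0:ℝ) - 0) * g e j +
              (cf e - 0) * (g e j) ^ 2)) *
            Real.exp (∑ j, (-(h e j) ^ 2 / 2 - f e * h e j + ((0:ℝ) - 0) * h e j +
              (cf e - 0) * (h e j) ^ 2))) := by
    funext e
    rw [itg, Real.exp_sum, Real.exp_sum]
  rw [hrw]
  have h1 : ContDiff ℝ 1 fun e => vdm (Fin.append (g e) (h e)) :=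
    contDiff_vdm.comp (contDiff_append.comp (hg.prodMk hh))
  have h2 : ContDiff ℝ 1 fun e => vdm (g e) := contDiff_vdm.comp hg
  have h3 : ContDiff ℝ 1 fun e => vdm (h e) := contDiff_vdm.comp hh
  have h4 : ContDiff ℝ 1 fun e =>
      ∑ j, (-(g e j) ^ 2 / 2 + f e * g e j + ((0:ℝ) - 0) * g e j +
        (cf e - 0) * (g e j) ^ 2) := by
    refine contDiff_finset_sum _ _ fun j _ => ?_
    have hgj : ContDiff ℝ 1 fun e => g e j := (contDiff_apply ℝ ℝ j).comp hg
    fun_prop (disch := norm_num)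
  have h5 : ContDiff ℝ 1 fun e =>
      ∑ j, (-(h e j) ^ 2 / 2 - f e * h e j + ((0:ℝ) - 0) * h e j +
        (cf e - 0) * (h e j) ^ 2) := by
    refine contDiff_finset_sum _ _ fun j _ => ?_
    have hhj : ContDiff ℝ 1 fun e => h e j := (contDiff_apply ℝ ℝ j).comp hh
    fun_prop (disch := norm_num)
  exact ((h1.mul h2).mul h3).mul ((Real.contDiff_exp.comp h4).mul (Real.contDiff_exp.comp h5))

lemma continuous_itg (a c : ℝ) : Continuous (itg k1 k2 a c) := by
  have h := (contDiff_itg' (k1 := k1) (k2 := k2) (f := fun _ : ZZ k1 k2 => a)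
    (cf := fun _ => c) (g := Prod.fst) (h := Prod.snd)
    contDiff_const contDiff_const contDiff_fst contDiff_snd).continuous
  exact h

/-- Flattening `tau6` at the special parameter values. -/
lemma tau6_flat (a c : ℝ) (b : Fin (2 * r) → ℝ) :
    tau6 k1 k2 r 0 c 0 0 0 0 a b =
      (1 / ((k1.factorial : ℝ) * (k2.factorial : ℝ))) *
        ∫ z in PP k1 k2 r b, itg k1 k2 a c z ∂(vv k1 k2) := by
  have hint : IntegrableOn (itg k1 k2 a c) (PP k1 k2 r b) (vv k1 k2) :=
    (continuous_itg a c).continuousOn.integrableOn_compact (isCompact_PP b)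
  have h : ∫ z in PP k1 k2 r b, itg k1 k2 a c z ∂(vv k1 k2) =
      ∫ x in piE k1 r b, ∫ y in piE k2 r b, itg k1 k2 a c (x, y) :=
    setIntegral_prod (μ := (volume : Measure (Fin k1 → ℝ)))
      (ν := (volume : Measure (Fin k2 → ℝ))) (itg k1 k2 a c) hint
  rw [tau6, h]
  rfl

/-! ### Decomposition into boxes and change of variables -/

def box (k r : ℕ) (σ : Fin k → Fin r) (b : Fin (2 * r) → ℝ) : Set (Fin k → ℝ) :=
  univ.pi fun j => Icc (b (loIdx r (σ j))) (b (hiIdx r (σ j)))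

lemma measurableSet_box (σ : Fin k → Fin r) (b : Fin (2 * r) → ℝ) :
    MeasurableSet (box k r σ b) :=
  MeasurableSet.univ_pi fun _ => measurableSet_Icc

lemma isCompact_box (σ : Fin k → Fin r) (b : Fin (2 * r) → ℝ) :
    IsCompact (box k r σ b) :=
  isCompact_univ_pi fun _ => isCompact_Icc

lemma piE_eq_iUnion (b : Fin (2 * r) → ℝ) :
    piE k r b = ⋃ σ : Fin k → Fin r, box k r σ b := by
  rw [piE, Eset_eq]
  exact (Set.iUnion_univ_pi fun _ i => Icc (b (loIdx r i)) (b (hiIdx r i))).symm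

lemma Icc_pair_disjoint {b : Fin (2 * r) → ℝ} (hb : StrictMono b) {i i' : Fin r}
    (h : i ≠ i') : Disjoint (Icc (b (loIdx r i)) (b (hiIdx r i)))
      (Icc (b (loIdx r i')) (b (hiIdx r i'))) := by
  have key : ∀ i i' : Fin r, i < i' → Disjoint (Icc (b (loIdx r i)) (b (hiIdx r i)))
      (Icc (b (loIdx r i')) (b (hiIdx r i'))) := by
    intro i i' hlt
    rw [Set.disjoint_left]
    intro x hx hx'
    have h1 : x ≤ b (hiIdx r i) := hx.2
    have h2 : b (loIdx r i') ≤ x := hx'.1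
    have h3 : b (hiIdx r i) < b (loIdx r i') := by
      apply hb
      simp only [hiIdx, loIdx, Fin.lt_def]
      have : (i : ℕ) < i' := hlt
      omega
    linarith
  rcases lt_or_gt_of_ne h with hlt | hlt
  · exact key _ _ hlt
  · exact (key _ _ hlt).symm

lemma box_disjoint {b : Fin (2 * r) → ℝ} (hb : StrictMono b) {σ τ : Fin k → Fin r}
    (h : σ ≠ τ) : Disjoint (box k r σ b) (box k r τ b) := by
  obtain ⟨j, hj⟩ : ∃ j, σ j ≠ τ j := by
    by_contra hcon
    push_neg at hcon
    exact h (funext hcon)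
  rw [Set.disjoint_left]
  intro x hx hx'
  have h1 : x j ∈ Icc (b (loIdx r (σ j))) (b (hiIdx r (σ j))) := hx j (Set.mem_univ j)
  have h2 : x j ∈ Icc (b (loIdx r (τ j))) (b (hiIdx r (τ j))) := hx' j (Set.mem_univ j)
  exact (Icc_pair_disjoint hb hj).le_bot ⟨h1, h2⟩

def cube (k : ℕ) : Set (Fin k → ℝ) := univ.pi fun _ : Fin k => Icc (0 : ℝ) 1

def QQ (k1 k2 : ℕ) : Set (ZZ k1 k2) := cube k1 ×ˢ cube k2

lemma measurableSet_cube : MeasurableSet (cube k) :=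
  MeasurableSet.univ_pi fun _ => measurableSet_Icc

lemma isCompact_cube : IsCompact (cube k) := isCompact_univ_pi fun _ => isCompact_Icc

lemma measurableSet_QQ : MeasurableSet (QQ k1 k2) :=
  measurableSet_cube.prod measurableSet_cube

lemma isCompact_QQ : IsCompact (QQ k1 k2) := isCompact_cube.prod isCompact_cube

/-- The affine reparametrization of a box by the unit cube. -/
def aff (k r : ℕ) (σ : Fin k → Fin r) (b : Fin (2 * r) → ℝ) (t : Fin k → ℝ) : Fin k → ℝ :=
  fun j => b (loIdx r (σ j)) + (b (hiIdx r (σ j)) - b (loIdx r (σ j))) * t j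

def affCLM (k r : ℕ) (σ : Fin k → Fin r) (b : Fin (2 * r) → ℝ) :
    (Fin k → ℝ) →L[ℝ] (Fin k → ℝ) :=
  ContinuousLinearMap.pi fun j =>
    (b (hiIdx r (σ j)) - b (loIdx r (σ j))) • ContinuousLinearMap.proj j

lemma hasFDerivAt_aff (σ : Fin k → Fin r) (b : Fin (2 * r) → ℝ) (t : Fin k → ℝ) :
    HasFDerivAt (aff k r σ b) (affCLM k r σ b) t := by
  have : aff k r σ b = fun t => (fun j => b (loIdx r (σ j))) + (affCLM k r σ b) t := by
    funext t j
    simp [aff, affCLM, ContinuousLinearMap.proj_apply, Pi.add_apply]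
  rw [this]
  exact (affCLM k r σ b).hasFDerivAt.const_add _

lemma det_affCLM (σ : Fin k → Fin r) (b : Fin (2 * r) → ℝ) :
    LinearMap.det ((affCLM k r σ b) : (Fin k → ℝ) →ₗ[ℝ] (Fin k → ℝ)) =
      ∏ j, (b (hiIdx r (σ j)) - b (loIdx r (σ j))) := by
  have hE : ((affCLM k r σ b) : (Fin k → ℝ) →ₗ[ℝ] (Fin k → ℝ)) =
      Matrix.toLin' (Matrix.diagonal fun j => b (hiIdx r (σ j)) - b (loIdx r (σ j))) := by
    apply LinearMap.ext; intro t
    funext j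
    simp [affCLM, Matrix.toLin'_apply, Matrix.mulVec_diagonal, mul_comm]
  rw [hE, LinearMap.det_toLin', Matrix.det_diagonal]

lemma image_aff {b : Fin (2 * r) → ℝ} (hb : StrictMono b) (σ : Fin k → Fin r) :
    aff k r σ b '' cube k = box k r σ b := by
  ext w
  constructor
  · rintro ⟨t, ht, rfl⟩
    intro j _
    have htj : t j ∈ Icc (0:ℝ) 1 := ht j (Set.mem_univ j)
    have hlt := lo_lt_hi hb (σ j)
    constructor
    · have : 0 ≤ (b (hiIdx r (σ j)) - b (loIdx r (σ j))) * t j := by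
        apply mul_nonneg (by linarith [hlt]) htj.1
      simp only [aff]; linarith
    · have : (b (hiIdx r (σ j)) - b (loIdx r (σ j))) * t j
          ≤ b (hiIdx r (σ j)) - b (loIdx r (σ j)) := by
        nlinarith [htj.2, hlt]
      simp only [aff]; linarith
  · intro hw
    refine ⟨fun j => (w j - b (loIdx r (σ j))) / (b (hiIdx r (σ j)) - b (loIdx r (σ j))),
      fun j _ => ?_, ?_⟩
    · have hwj := hw j (Set.mem_univ j)
      have hlt := lo_lt_hi hb (σ j)
      constructor
      · apply div_nonneg (by linarith [hwj.1]) (by linarith)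
      · rw [div_le_one (by linarith)]
        linarith [hwj.2]
    · funext j
      have hlt := lo_lt_hi hb (σ j)
      simp only [aff]
      rw [mul_div_cancel₀ _ (ne_of_gt (by linarith : (0:ℝ) < b (hiIdx r (σ j)) - b (loIdx r (σ j))))]
      ring

lemma injOn_aff {b : Fin (2 * r) → ℝ} (hb : StrictMono b) (σ : Fin k → Fin r) :
    Set.InjOn (aff k r σ b) (cube k) := by
  intro t _ t' _ hte
  funext j
  have hj := congrFun hte j
  simp only [aff] at hj
  have hlt := lo_lt_hi hb (σ j)
  have : (b (hiIdx r (σ j)) - b (loIdx r (σ j))) * t j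
      = (b (hiIdx r (σ j)) - b (loIdx r (σ j))) * t' j := by linarith
  exact mul_left_cancel₀ (ne_of_gt (by linarith : (0:ℝ) < b (hiIdx r (σ j)) - b (loIdx r (σ j)))) this

/-- Change of variables for a single box. -/
lemma cov_box {b : Fin (2 * r) → ℝ} (hb : StrictMono b) (σ : Fin k1 → Fin r)
    (τ : Fin k2 → Fin r) (g : ZZ k1 k2 → ℝ) :
    ∫ z in box k1 r σ b ×ˢ box k2 r τ b, g z ∂(vv k1 k2) =
      ((∏ j, (b (hiIdx r (σ j)) - b (loIdx r (σ j)))) *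
          ∏ j, (b (hiIdx r (τ j)) - b (loIdx r (τ j)))) *
        ∫ w in QQ k1 k2, g (aff k1 r σ b w.1, aff k2 r τ b w.2) ∂(vv k1 k2) := by
  have himg : (fun w : ZZ k1 k2 => (aff k1 r σ b w.1, aff k2 r τ b w.2)) '' QQ k1 k2 =
      box k1 r σ b ×ˢ box k2 r τ b := by
    rw [QQ, ← Set.prod_image_image_eq, image_aff hb σ, image_aff hb τ]
  have hder : ∀ w ∈ QQ k1 k2, HasFDerivWithinAt
      (fun w : ZZ k1 k2 => (aff k1 r σ b w.1, aff k2 r τ b w.2))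
      ((affCLM k1 r σ b).prodMap (affCLM k2 r τ b)) (QQ k1 k2) w := by
    intro w _
    exact ((hasFDerivAt_aff σ b w.1).prodMap (p := w) (hasFDerivAt_aff τ b w.2)).hasFDerivWithinAt
  have hinj : Set.InjOn (fun w : ZZ k1 k2 => (aff k1 r σ b w.1, aff k2 r τ b w.2)) (QQ k1 k2) := by
    rintro ⟨w1, w2⟩ hw ⟨w1', w2'⟩ hw' heq
    have e1 : aff k1 r σ b w1 = aff k1 r σ b w1' := congrArg Prod.fst heq
    have e2 : aff k2 r τ b w2 = aff k2 r τ b w2' := congrArg Prod.snd heq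
    have := injOn_aff hb σ hw.1 hw'.1 e1
    have := injOn_aff hb τ hw.2 hw'.2 e2
    simp_all
  have hdet : LinearMap.det (((affCLM k1 r σ b).prodMap (affCLM k2 r τ b)) :
      ZZ k1 k2 →ₗ[ℝ] ZZ k1 k2) =
      (∏ j, (b (hiIdx r (σ j)) - b (loIdx r (σ j)))) *
        ∏ j, (b (hiIdx r (τ j)) - b (loIdx r (τ j))) := by
    have hcoe : (((affCLM k1 r σ b).prodMap (affCLM k2 r τ b)) : ZZ k1 k2 →ₗ[ℝ] ZZ k1 k2) =
        LinearMap.prodMap ((affCLM k1 r σ b) : (Fin k1 → ℝ) →ₗ[ℝ] (Fin k1 → ℝ))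
          ((affCLM k2 r τ b) : (Fin k2 → ℝ) →ₗ[ℝ] (Fin k2 → ℝ)) := by
      apply LinearMap.ext; intro z; rfl
    rw [hcoe, ← LinearMap.det_toMatrix ((Pi.basisFun ℝ (Fin k1)).prod (Pi.basisFun ℝ (Fin k2))),
      LinearMap.toMatrix_prodMap, Matrix.det_fromBlocks_zero₂₁, LinearMap.det_toMatrix,
      LinearMap.det_toMatrix, det_affCLM, det_affCLM]
  have hpos1 : 0 < ∏ j, (b (hiIdx r (σ j)) - b (loIdx r (σ j))) :=
    Finset.prod_pos fun j _ => sub_pos.mpr (lo_lt_hi hb (σ j))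
  have hpos2 : 0 < ∏ j, (b (hiIdx r (τ j)) - b (loIdx r (τ j))) :=
    Finset.prod_pos fun j _ => sub_pos.mpr (lo_lt_hi hb (τ j))
  rw [← himg, integral_image_eq_integral_abs_det_fderiv_smul (vv k1 k2) measurableSet_QQ
    hder hinj g]
  simp only [hdet, abs_of_pos (mul_pos hpos1 hpos2), smul_eq_mul]
  rw [integral_const_mul]

/-- Decomposition of the integral over `E^{k1} × E^{k2}`. -/
lemma integral_PP (b : Fin (2 * r) → ℝ) (hb : StrictMono b) (g : ZZ k1 k2 → ℝ)
    (hg : Continuous g) :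
    ∫ z in PP k1 k2 r b, g z ∂(vv k1 k2) =
      ∑ st : (Fin k1 → Fin r) × (Fin k2 → Fin r),
        ∫ z in box k1 r st.1 b ×ˢ box k2 r st.2 b, g z ∂(vv k1 k2) := by
  have hPP : PP k1 k2 r b = ⋃ st ∈ (Finset.univ : Finset ((Fin k1 → Fin r) × (Fin k2 → Fin r))),
      box k1 r st.1 b ×ˢ box k2 r st.2 b := by
    simp only [Finset.mem_univ, Set.iUnion_true]
    rw [PP, piE_eq_iUnion, piE_eq_iUnion]
    ext z
    simp only [Set.mem_prod, Set.mem_iUnion]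
    constructor
    · rintro ⟨⟨σ, hσ⟩, ⟨τ, hτ⟩⟩
      exact ⟨(σ, τ), hσ, hτ⟩
    · rintro ⟨st, h1, h2⟩
      exact ⟨⟨st.1, h1⟩, ⟨st.2, h2⟩⟩
  rw [hPP, integral_biUnion_finset]
  · intro st _
    exact (measurableSet_box st.1 b).prod (measurableSet_box st.2 b)
  · intro st _ st' _ hne
    have hne' : st.1 ≠ st'.1 ∨ st.2 ≠ st'.2 := by
      by_contra hcon
      push_neg at hcon
      exact hne (Prod.ext hcon.1 hcon.2)
    simp only [Function.onFun]
    rw [Set.disjoint_left]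
    rintro ⟨z1, z2⟩ ⟨h1, h2⟩ ⟨h1', h2'⟩
    rcases hne' with hne' | hne'
    · exact (box_disjoint hb hne').le_bot ⟨h1, h1'⟩
    · exact (box_disjoint hb hne').le_bot ⟨h2, h2'⟩
  · intro st _
    exact hg.continuousOn.integrableOn_compact
      ((isCompact_box st.1 b).prod (isCompact_box st.2 b))

/-! ### The parametric-integral differentiability lemma -/

lemma diffAt_param {P : Type*} [NormedAddCommGroup P] [NormedSpace ℝ P]
    [FiniteDimensional ℝ P]
    (F : P × ZZ k1 k2 → ℝ) (hF : ContDiff ℝ 1 F) (p₀ : P) :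
    DifferentiableAt ℝ (fun p => ∫ w in QQ k1 k2, F (p, w) ∂(vv k1 k2)) p₀ := by
  have hQm := measurableSet_QQ (k1 := k1) (k2 := k2)
  have hQc := isCompact_QQ (k1 := k1) (k2 := k2)
  haveI : IsFiniteMeasure ((vv k1 k2).restrict (QQ k1 k2)) := by
    constructor
    rw [Measure.restrict_apply_univ]
    exact hQc.measure_lt_top
  have hFdc : Continuous (fun q : P × ZZ k1 k2 => fderiv ℝ F q) := hF.continuous_fderiv one_ne_zero
  obtain ⟨M, hM⟩ :=
    ((isCompact_closedBall p₀ 1).prod hQc).exists_bound_of_continuousOn hFdc.continuousOn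
  have hdiffAt : ∀ (p : P) (w : ZZ k1 k2), HasFDerivAt (fun p' => F (p', w))
      ((fderiv ℝ F (p, w)).comp (ContinuousLinearMap.inl ℝ P (ZZ k1 k2))) p := fun p w =>
    (((hF.differentiable one_ne_zero) (p, w)).hasFDerivAt).comp p (hasFDerivAt_prodMk_left p w)
  have hcompnorm : ∀ L : (P × ZZ k1 k2) →L[ℝ] ℝ,
      ‖L.comp (ContinuousLinearMap.inl ℝ P (ZZ k1 k2))‖ ≤ ‖L‖ := by
    intro L
    refine ContinuousLinearMap.opNorm_le_bound _ (norm_nonneg L) fun v => ?_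
    have hn : ‖(ContinuousLinearMap.inl ℝ P (ZZ k1 k2)) v‖ = ‖v‖ := by
      simp [Prod.norm_def]
    calc ‖L ((ContinuousLinearMap.inl ℝ P (ZZ k1 k2)) v)‖
        ≤ ‖L‖ * ‖(ContinuousLinearMap.inl ℝ P (ZZ k1 k2)) v‖ := L.le_opNorm _
      _ = ‖L‖ * ‖v‖ := by rw [hn]
  have key := hasFDerivAt_integral_of_dominated_loc_of_lip
    (μ := (vv k1 k2).restrict (QQ k1 k2))
    (F := fun p w => F (p, w))
    (F' := fun w => (fderiv ℝ F (p₀, w)).comp (ContinuousLinearMap.inl ℝ P (ZZ k1 k2)))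
    (x₀ := p₀) (bound := fun _ => M) (s := Metric.ball p₀ 1) (Metric.ball_mem_nhds p₀ zero_lt_one)
    (Filter.Eventually.of_forall fun p =>
      ((hF.continuous.comp (Continuous.prodMk_right p)).aestronglyMeasurable))
    ((hF.continuous.comp (Continuous.prodMk_right p₀)).continuousOn.integrableOn_compact hQc)
    (Continuous.aestronglyMeasurable
      (((ContinuousLinearMap.compL ℝ P (P × ZZ k1 k2) ℝ).flip
          (ContinuousLinearMap.inl ℝ P (ZZ k1 k2))).continuous.comp
        (hFdc.comp (Continuous.prodMk_right p₀))))
    ?_ (integrable_const M) (Filter.Eventually.of_forall fun w => hdiffAt p₀ w)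
  · exact key.2.differentiableAt
  · filter_upwards [ae_restrict_mem hQm] with w hw
    apply Convex.lipschitzOnWith_of_nnnorm_hasFDerivWithin_le
      (f' := fun p => (fderiv ℝ F (p, w)).comp (ContinuousLinearMap.inl ℝ P (ZZ k1 k2)))
      (fun p _ => (hdiffAt p w).hasFDerivWithinAt) ?_ (convex_ball p₀ 1)
    intro p hp
    have h1 : ‖(fderiv ℝ F (p, w)).comp (ContinuousLinearMap.inl ℝ P (ZZ k1 k2))‖ ≤ M :=
      le_trans (hcompnorm _) (hM (p, w) ⟨Metric.ball_subset_closedBall hp, hw⟩)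
    have h2 : M ≤ |M| := le_abs_self M
    rw [← NNReal.coe_le_coe]
    simpa using le_trans h1 h2

/-! ### The smooth substitute `psi` -/

def psi (k1 k2 r : ℕ) (p : ℝ × (Fin (2 * r) → ℝ)) : ℝ :=
  (1 / ((k1.factorial : ℝ) * (k2.factorial : ℝ))) *
    ∑ st : (Fin k1 → Fin r) × (Fin k2 → Fin r),
      ((∏ j, (p.2 (hiIdx r (st.1 j)) - p.2 (loIdx r (st.1 j)))) *
          ∏ j, (p.2 (hiIdx r (st.2 j)) - p.2 (loIdx r (st.2 j)))) *
        ∫ w in QQ k1 k2, itg k1 k2 p.1 0 (aff k1 r st.1 p.2 w.1, aff k2 r st.2 p.2 w.2)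
          ∂(vv k1 k2)

/-- `tau6` at the zero parameters, as a function of `(a, b)`. -/
def tph (k1 k2 r : ℕ) (p : ℝ × (Fin (2 * r) → ℝ)) : ℝ :=
  tau6 k1 k2 r 0 0 0 0 0 0 p.1 p.2

lemma tph_eq_psi {b : Fin (2 * r) → ℝ} (hb : StrictMono b) (a : ℝ) :
    tph k1 k2 r (a, b) = psi k1 k2 r (a, b) := by
  rw [tph]
  rw [tau6_flat a 0 b, integral_PP b hb _ (continuous_itg a 0), psi]
  congr 1
  apply Finset.sum_congr rfl
  intro st _
  exact cov_box hb st.1 st.2 (itg k1 k2 a 0)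

set_option maxHeartbeats 2000000 in
lemma differentiableAt_psi (p₀ : ℝ × (Fin (2 * r) → ℝ)) :
    DifferentiableAt ℝ (psi k1 k2 r) p₀ := by
  apply DifferentiableAt.const_mul
  apply DifferentiableAt.fun_sum
  intro st _
  apply DifferentiableAt.mul
  · apply DifferentiableAt.mul
    · have h := (contDiff_finset_prod (E := ℝ × (Fin (2 * r) → ℝ)) Finset.univ
        (fun j p => p.2 (hiIdx r (st.1 j)) - p.2 (loIdx r (st.1 j)))
        (fun j _ => by fun_prop)).differentiable one_ne_zero
      exact h.differentiableAt
    · have h := (contDiff_finset_prod (E := ℝ × (Fin (2 * r) → ℝ)) Finset.univ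
        (fun j p => p.2 (hiIdx r (st.2 j)) - p.2 (loIdx r (st.2 j)))
        (fun j _ => by fun_prop)).differentiable one_ne_zero
      exact h.differentiableAt
  · have hg1 : ContDiff ℝ 1 (fun pw : (ℝ × (Fin (2 * r) → ℝ)) × ZZ k1 k2 =>
        aff k1 r st.1 pw.1.2 pw.2.1) := by
      rw [contDiff_pi]
      intro j
      simp only [aff]
      fun_prop
    have hg2 : ContDiff ℝ 1 (fun pw : (ℝ × (Fin (2 * r) → ℝ)) × ZZ k1 k2 =>
        aff k2 r st.2 pw.1.2 pw.2.2) := by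
      rw [contDiff_pi]
      intro j
      simp only [aff]
      fun_prop
    have hFc : ContDiff ℝ 1 (fun pw : (ℝ × (Fin (2 * r) → ℝ)) × ZZ k1 k2 =>
        itg k1 k2 pw.1.1 0 (aff k1 r st.1 pw.1.2 pw.2.1, aff k2 r st.2 pw.1.2 pw.2.2)) := by
      have h := contDiff_itg' (k1 := k1) (k2 := k2)
        (f := fun pw : (ℝ × (Fin (2 * r) → ℝ)) × ZZ k1 k2 => pw.1.1)
        (cf := fun _ => (0:ℝ)) (g := fun pw => aff k1 r st.1 pw.1.2 pw.2.1)
        (h := fun pw => aff k2 r st.2 pw.1.2 pw.2.2)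
        (by fun_prop) contDiff_const hg1 hg2
      exact h
    exact diffAt_param _ hFc p₀

lemma eventually_strictMono {b : Fin (2 * r) → ℝ} (hb : StrictMono b) (a : ℝ) :
    ∀ᶠ p : ℝ × (Fin (2 * r) → ℝ) in nhds (a, b), StrictMono p.2 := by
  have h : ∀ᶠ p : ℝ × (Fin (2 * r) → ℝ) in nhds (a, b),
      ∀ q : Fin (2 * r) × Fin (2 * r), q.1 < q.2 → p.2 q.1 < p.2 q.2 := by
    rw [Filter.eventually_all]
    intro q
    by_cases hq : q.1 < q.2
    · have hcont : ∀ j : Fin (2 * r), Continuous fun p : ℝ × (Fin (2 * r) → ℝ) => p.2 j :=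
        fun j => (continuous_apply j).comp continuous_snd
      have := ContinuousAt.eventually_lt ((hcont q.1).continuousAt (x := (a, b)))
        ((hcont q.2).continuousAt (x := (a, b))) (by simpa using hb hq)
      filter_upwards [this] with p hp
      intro _
      exact hp
    · filter_upwards with p hp
      exact absurd hp hq
  filter_upwards [h] with p hp
  intro i j hij
  exact hp (i, j) hij

lemma differentiableAt_tph {b : Fin (2 * r) → ℝ} (hb : StrictMono b) (a : ℝ) :
    DifferentiableAt ℝ (tph k1 k2 r) (a, b) := by
  apply (differentiableAt_psi (k1 := k1) (k2 := k2) (r := r) (a, b)).congr_of_eventuallyEq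
  filter_upwards [eventually_strictMono hb a] with p hp
  exact tph_eq_psi hp p.1

/-! ### Scaling -/

/-- Total homogeneity degree plus dimension. -/
def NN (k1 k2 : ℕ) : ℕ :=
  (k1 + k2) + ((∑ i : Fin (k1 + k2), (Finset.Ioi i).card) +
    (∑ i : Fin k1, (Finset.Ioi i).card) + ∑ i : Fin k2, (Finset.Ioi i).card)

lemma sum_card_Ioi (m : ℕ) : (∑ i : Fin m, (Finset.Ioi i).card) * 2 = m * (m - 1) := by
  have h : (∑ i : Fin m, (Finset.Ioi i).card) = ∑ i ∈ Finset.range m, (m - 1 - i) := by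
    rw [← Fin.sum_univ_eq_sum_range (fun i => m - 1 - i) m]
    exact Finset.sum_congr rfl fun i _ => Fin.card_Ioi i
  rw [h, Finset.sum_range_reflect (fun i => i) m, Finset.sum_range_id_mul_two]

lemma sum_card_Ioi_cast (m : ℕ) :
    ((∑ i : Fin m, (Finset.Ioi i).card : ℕ) : ℝ) = ((m : ℝ) ^ 2 - m) / 2 := by
  cases m with
  | zero => simp
  | succ n =>
    have h := sum_card_Ioi (n + 1)
    have h2 : ((∑ i : Fin (n + 1), (Finset.Ioi i).card : ℕ) : ℝ) * 2 = ((n : ℝ) + 1) * n := by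
      have : (n + 1) * (n + 1 - 1) = (n + 1) * n := by simp
      rw [this] at h
      exact_mod_cast congrArg (Nat.cast (R := ℝ)) h
    have h3 : (((n : ℝ) + 1) ^ 2 - ((n : ℝ) + 1)) / 2 = (((n : ℝ) + 1) * n) / 2 := by ring
    push_cast
    push_cast at h2
    linarith

lemma NN_cast : (NN k1 k2 : ℝ) = (k1 : ℝ) ^ 2 + (k1 : ℝ) * (k2 : ℝ) + (k2 : ℝ) ^ 2 := by
  have e1 := sum_card_Ioi_cast (k1 + k2)
  have e2 := sum_card_Ioi_cast k1
  have e3 := sum_card_Ioi_cast k2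
  unfold NN
  push_cast
  push_cast at e1 e2 e3
  rw [e1, e2, e3]
  ring

lemma vdm_smul {m : ℕ} (μ : ℝ) (x : Fin m → ℝ) :
    vdm (fun j => μ * x j) = μ ^ (∑ i : Fin m, (Finset.Ioi i).card) * vdm x := by
  unfold vdm
  have h : ∀ i j : Fin m, μ * x j - μ * x i = μ * (x j - x i) := by intros; ring
  simp_rw [h, Finset.prod_mul_distrib, Finset.prod_const, ← Finset.prod_pow_eq_pow_sum]

lemma itg_smul {μ a c : ℝ} (hμ : 0 < μ) (hc : μ ^ 2 * (1 - 2 * c) = 1) (z : ZZ k1 k2) :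
    itg k1 k2 a c (μ • z) =
      μ ^ ((∑ i : Fin (k1 + k2), (Finset.Ioi i).card) +
        (∑ i : Fin k1, (Finset.Ioi i).card) + ∑ i : Fin k2, (Finset.Ioi i).card) *
        itg k1 k2 (a * μ) 0 z := by
  obtain ⟨x, y⟩ := z
  have happ : Fin.append (μ • x) (μ • y) = fun j => μ * Fin.append x y j := by
    funext j
    induction j using Fin.addCases with
    | left i' => simp [Fin.append_left]
    | right i' => simp [Fin.append_right]
  have hx : (μ • x) = fun j => μ * x j := rfl
  have hy : (μ • y) = fun j => μ * y j := rfl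
  show itg k1 k2 a c (μ • x, μ • y) = _
  have hexp1 : ∀ j : Fin k1,
      Real.exp (-(μ * x j) ^ 2 / 2 + a * (μ * x j) + ((0:ℝ) - 0) * (μ * x j) +
          (c - 0) * (μ * x j) ^ 2) =
        Real.exp (-(x j) ^ 2 / 2 + (a * μ) * x j + ((0:ℝ) - 0) * x j +
          ((0:ℝ) - 0) * (x j) ^ 2) := by
    intro j
    congr 1
    linear_combination (-(x j) ^ 2 / 2) * hc
  have hexp2 : ∀ j : Fin k2,
      Real.exp (-(μ * y j) ^ 2 / 2 - a * (μ * y j) + ((0:ℝ) - 0) * (μ * y j) +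
          (c - 0) * (μ * y j) ^ 2) =
        Real.exp (-(y j) ^ 2 / 2 - (a * μ) * y j + ((0:ℝ) - 0) * y j +
          ((0:ℝ) - 0) * (y j) ^ 2) := by
    intro j
    congr 1
    linear_combination (-(y j) ^ 2 / 2) * hc
  rw [itg, itg]
  simp only
  rw [happ, hx, hy, vdm_smul, vdm_smul, vdm_smul]
  rw [Finset.prod_congr rfl (fun j _ => hexp1 j), Finset.prod_congr rfl (fun j _ => hexp2 j)]
  ring

lemma PP_smul {μ : ℝ} (hμ : 0 < μ) (b : Fin (2 * r) → ℝ) :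
    (fun z : ZZ k1 k2 => μ • z) '' PP k1 k2 r (μ⁻¹ • b) = PP k1 k2 r b := by
  have hEs : ∀ t : ℝ, t ∈ Eset r (μ⁻¹ • b) ↔ μ * t ∈ Eset r b := by
    intro t
    simp only [Eset_eq, Set.mem_iUnion, Set.mem_Icc, Pi.smul_apply, smul_eq_mul]
    refine exists_congr fun i => ?_
    have hμ' : μ ≠ 0 := ne_of_gt hμ
    constructor
    · rintro ⟨h1, h2⟩
      constructor
      · have := mul_le_mul_of_nonneg_left h1 hμ.le
        rwa [← mul_assoc, mul_inv_cancel₀ hμ', one_mul] at this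
      · have := mul_le_mul_of_nonneg_left h2 hμ.le
        rwa [← mul_assoc, mul_inv_cancel₀ hμ', one_mul] at this
    · rintro ⟨h1, h2⟩
      constructor
      · have := mul_le_mul_of_nonneg_left h1 (inv_pos.mpr hμ).le
        rwa [← mul_assoc, inv_mul_cancel₀ hμ', one_mul] at this
      · have := mul_le_mul_of_nonneg_left h2 (inv_pos.mpr hμ).le
        rwa [← mul_assoc, inv_mul_cancel₀ hμ', one_mul] at this
  ext z
  constructor
  · rintro ⟨w, hw, rfl⟩
    refine ⟨fun j _ => ?_, fun j _ => ?_⟩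
    · exact (hEs (w.1 j)).mp (hw.1 j (Set.mem_univ j))
    · exact (hEs (w.2 j)).mp (hw.2 j (Set.mem_univ j))
  · intro hz
    refine ⟨μ⁻¹ • z, ⟨fun j _ => ?_, fun j _ => ?_⟩, smul_inv_smul₀ (ne_of_gt hμ) z⟩
    · show μ⁻¹ * z.1 j ∈ Eset r (μ⁻¹ • b)
      rw [hEs, mul_inv_cancel_left₀ (ne_of_gt hμ)]
      exact hz.1 j (Set.mem_univ j)
    · show μ⁻¹ * z.2 j ∈ Eset r (μ⁻¹ • b)
      rw [hEs, mul_inv_cancel_left₀ (ne_of_gt hμ)]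
      exact hz.2 j (Set.mem_univ j)

lemma scaling {c : ℝ} (hc : c < 1 / 2) (a : ℝ) (b : Fin (2 * r) → ℝ) :
    tau6 k1 k2 r 0 c 0 0 0 0 a b =
      ((Real.sqrt (1 - 2 * c))⁻¹) ^ NN k1 k2 *
        tau6 k1 k2 r 0 0 0 0 0 0 (a * (Real.sqrt (1 - 2 * c))⁻¹)
          (((Real.sqrt (1 - 2 * c))⁻¹)⁻¹ • b) := by
  set μ := (Real.sqrt (1 - 2 * c))⁻¹ with hμdef
  have h1 : 0 < 1 - 2 * c := by linarith
  have hs : 0 < Real.sqrt (1 - 2 * c) := Real.sqrt_pos.mpr h1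
  have hμ : 0 < μ := inv_pos.mpr hs
  have hc2 : μ ^ 2 * (1 - 2 * c) = 1 := by
    rw [hμdef, inv_pow, Real.sq_sqrt h1.le]
    field_simp
  have hder : ∀ z ∈ PP k1 k2 r (μ⁻¹ • b), HasFDerivWithinAt (fun z : ZZ k1 k2 => μ • z)
      (μ • ContinuousLinearMap.id ℝ (ZZ k1 k2)) (PP k1 k2 r (μ⁻¹ • b)) z :=
    fun z _ => ((hasFDerivAt_id z).const_smul μ).hasFDerivWithinAt
  have hinj : Set.InjOn (fun z : ZZ k1 k2 => μ • z) (PP k1 k2 r (μ⁻¹ • b)) :=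
    (smul_right_injective (ZZ k1 k2) (ne_of_gt hμ)).injOn
  have hcov := integral_image_eq_integral_abs_det_fderiv_smul (vv k1 k2)
    (measurableSet_PP (k1 := k1) (k2 := k2) (μ⁻¹ • b)) hder hinj (itg k1 k2 a c)
  have hdet : LinearMap.det ((μ • ContinuousLinearMap.id ℝ (ZZ k1 k2) :
      ZZ k1 k2 →L[ℝ] ZZ k1 k2) : ZZ k1 k2 →ₗ[ℝ] ZZ k1 k2) = μ ^ (k1 + k2) := by
    have hco : ((μ • ContinuousLinearMap.id ℝ (ZZ k1 k2) : ZZ k1 k2 →L[ℝ] ZZ k1 k2) :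
        ZZ k1 k2 →ₗ[ℝ] ZZ k1 k2) = μ • LinearMap.id := rfl
    rw [hco, LinearMap.det_smul, LinearMap.det_id, mul_one]
    congr 1
    simp [Module.finrank_prod]
  rw [tau6_flat a c b, tau6_flat (a * μ) 0 (μ⁻¹ • b), ← PP_smul hμ b, hcov]
  have hitg : ∀ z : ZZ k1 k2,
      |LinearMap.det ((μ • ContinuousLinearMap.id ℝ (ZZ k1 k2) : ZZ k1 k2 →L[ℝ] ZZ k1 k2) :
        ZZ k1 k2 →ₗ[ℝ] ZZ k1 k2)| • itg k1 k2 a c (μ • z) =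
      (μ ^ (k1 + k2) * μ ^ ((∑ i : Fin (k1 + k2), (Finset.Ioi i).card) +
        (∑ i : Fin k1, (Finset.Ioi i).card) + ∑ i : Fin k2, (Finset.Ioi i).card)) *
        itg k1 k2 (a * μ) 0 z := by
    intro z
    rw [hdet, abs_of_pos (pow_pos hμ _), smul_eq_mul, itg_smul hμ hc2 z]
    ring
  rw [MeasureTheory.setIntegral_congr_fun (measurableSet_PP (μ⁻¹ • b)) (fun z _ => hitg z),
    integral_const_mul]
  rw [NN]
  ring

lemma hasDerivAt_update (b : Fin (2 * r) → ℝ) (i : Fin (2 * r)) (s₀ : ℝ) :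
    HasDerivAt (fun s => Function.update b i s) (Pi.single i 1) s₀ := by
  have h : (fun s => Function.update b i s)
      = fun s : ℝ => Function.update b i 0 + s • (Pi.single i (1:ℝ) : Fin (2 * r) → ℝ) := by
    funext s j
    rcases eq_or_ne j i with rfl | hj
    · simp
    · simp [Function.update_apply, hj, Pi.single_eq_of_ne hj]
  rw [h]
  simpa using ((hasDerivAt_id s₀).smul_const (Pi.single i (1:ℝ) : Fin (2 * r) → ℝ)).const_add
    (Function.update b i 0)

end S10

open S10 Set Filter in
/-- Virasoro constraint at `t1=t2=s1=s2=u1=u2=0`: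
`∂f/∂t2 = -Σ_i b_i ∂f/∂b_i + a ∂f/∂a + k1² + k1k2 + k2²` where `f = log τ`. -/
theorem statement10 (k1 k2 r : ℕ) (hn : 1 ≤ k1 + k2) (hr : 1 ≤ r)
    (a : ℝ) (b : Fin (2 * r) → ℝ) (hb : StrictMono b)
    (hpos : 0 < tau6 k1 k2 r 0 0 0 0 0 0 a b) :
    deriv (fun t2 => Real.log (tau6 k1 k2 r 0 t2 0 0 0 0 a b)) 0
      = -(∑ i : Fin (2 * r), b i *
            deriv (fun s => Real.log (tau6 k1 k2 r 0 0 0 0 0 0 a (Function.update b i s))) (b i))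
        + a * deriv (fun a' => Real.log (tau6 k1 k2 r 0 0 0 0 0 0 a' b)) a
        + ((k1 : ℝ) ^ 2 + (k1 : ℝ) * (k2 : ℝ) + (k2 : ℝ) ^ 2) := by
  classical
  have hpos' : 0 < tph k1 k2 r (a, b) := hpos
  have hτne : tph k1 k2 r (a, b) ≠ 0 := ne_of_gt hpos'
  have hΦ : DifferentiableAt ℝ (tph k1 k2 r) (a, b) := differentiableAt_tph hb a
  set L := fderiv ℝ (tph k1 k2 r) (a, b) with hLdef
  have hΦ' : HasFDerivAt (tph k1 k2 r) L (a, b) := hΦ.hasFDerivAt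
  -- the `a`-derivative
  have hcurveA : HasDerivAt (fun a' => ((a', b) : ℝ × (Fin (2 * r) → ℝ)))
      ((1 : ℝ), (0 : Fin (2 * r) → ℝ)) a := (hasDerivAt_id a).prodMk (hasDerivAt_const a b)
  have hA : HasDerivAt (fun a' => tph k1 k2 r (a', b)) (L (1, 0)) a :=
    hΦ'.comp_hasDerivAt (f := fun a' => ((a', b) : ℝ × (Fin (2 * r) → ℝ))) a hcurveA
  have hAd : deriv (fun a' => Real.log (tau6 k1 k2 r 0 0 0 0 0 0 a' b)) a
      = L (1, 0) / tph k1 k2 r (a, b) := (hA.log hτne).deriv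
  -- the `b i`-derivatives
  have hBd : ∀ i : Fin (2 * r),
      deriv (fun s => Real.log (tau6 k1 k2 r 0 0 0 0 0 0 a (Function.update b i s))) (b i)
        = L (0, Pi.single i 1) / tph k1 k2 r (a, b) := by
    intro i
    have heq : Function.update b i (b i) = b := Function.update_eq_self i b
    have hcurve : HasDerivAt (fun s => ((a, Function.update b i s) : ℝ × (Fin (2 * r) → ℝ)))
        ((0 : ℝ), Pi.single i 1) (b i) :=
      (hasDerivAt_const (b i) a).prodMk (S10.hasDerivAt_update b i (b i))
    have hΦ'' : HasFDerivAt (tph k1 k2 r) L (a, Function.update b i (b i)) := by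
      rw [heq]; exact hΦ'
    have hB : HasDerivAt (fun s => tph k1 k2 r (a, Function.update b i s))
        (L (0, Pi.single i 1)) (b i) := hΦ''.comp_hasDerivAt
          (f := fun s => ((a, Function.update b i s) : ℝ × (Fin (2 * r) → ℝ))) (b i) hcurve
    have hne : tph k1 k2 r (a, Function.update b i (b i)) ≠ 0 := by rw [heq]; exact hτne
    have hd := (hB.log hne).deriv
    rw [heq] at hd
    exact hd
  -- the `t2`-derivative via scaling
  set m : ℝ → ℝ := fun t => (Real.sqrt (1 - 2 * t))⁻¹ with hmdef
  have hm0 : m 0 = 1 := by simp [hmdef]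
  have hsq : HasDerivAt (fun t : ℝ => Real.sqrt (1 - 2 * t)) (-1) 0 := by
    have h1 : HasDerivAt (fun t : ℝ => 1 - 2 * t) (-2) 0 := by
      simpa using ((hasDerivAt_id (0 : ℝ)).const_mul 2).const_sub 1
    have h2 := (Real.hasDerivAt_sqrt (by norm_num : (1 : ℝ) - 2 * 0 ≠ 0)).comp 0 h1
    have h3 : 1 / (2 * Real.sqrt (1 - 2 * 0)) * (-2) = -1 := by
      norm_num
    rw [h3] at h2
    exact h2
  have hm : HasDerivAt m 1 0 := by
    have hne : Real.sqrt (1 - 2 * 0) ≠ 0 := by norm_num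
    have h3 := hsq.inv hne
    have h4 : -(-1) / Real.sqrt (1 - 2 * 0) ^ 2 = 1 := by norm_num
    rw [h4] at h3
    exact h3
  have hev : (fun t => Real.log (tau6 k1 k2 r 0 t 0 0 0 0 a b)) =ᶠ[nhds 0]
      (fun t => Real.log ((m t) ^ NN k1 k2 * tph k1 k2 r (a * m t, (m t)⁻¹ • b))) := by
    filter_upwards [isOpen_Iio.eventually_mem (show (0 : ℝ) ∈ Set.Iio (1 / 2) by norm_num)]
      with t ht
    rw [scaling ht a b]
    rfl
  have hc0 : ((a * m 0, (m 0)⁻¹ • b) : ℝ × (Fin (2 * r) → ℝ)) = (a, b) := by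
    rw [hm0]; simp
  have hΦT : HasFDerivAt (tph k1 k2 r) L (a * m 0, (m 0)⁻¹ • b) := by
    rw [hc0]; exact hΦ'
  have hcurveT : HasDerivAt (fun t => ((a * m t, (m t)⁻¹ • b) : ℝ × (Fin (2 * r) → ℝ)))
      ((a, -b)) 0 := by
    have h1 : HasDerivAt (fun t => a * m t) a 0 := by simpa using hm.const_mul a
    have h2 : HasDerivAt (fun t => (m t)⁻¹ • b) (-b) 0 := by
      have h3 : HasDerivAt (fun t => (m t)⁻¹) (-1) 0 := by
        have := hm.inv (by rw [hm0]; norm_num)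
        simp [hm0] at this; exact this
      simpa using h3.smul_const b
    exact h1.prodMk h2
  have hTT : HasDerivAt (fun t => tph k1 k2 r (a * m t, (m t)⁻¹ • b)) (L (a, -b)) 0 :=
    hΦT.comp_hasDerivAt
      (f := fun t => ((a * m t, (m t)⁻¹ • b) : ℝ × (Fin (2 * r) → ℝ))) 0 hcurveT
  have hpow : HasDerivAt (fun t => (m t) ^ NN k1 k2) ((NN k1 k2 : ℝ)) 0 := by
    have h := hm.pow (NN k1 k2); simp [hm0] at h; exact h
  have hmulT : HasDerivAt (fun t => (m t) ^ NN k1 k2 * tph k1 k2 r (a * m t, (m t)⁻¹ • b))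
      ((NN k1 k2 : ℝ) * tph k1 k2 r (a, b) + L (a, -b)) 0 := by
    have h5 := hpow.mul hTT
    rw [hc0, hm0] at h5
    simp at h5; exact h5
  have hmne : m 0 ^ NN k1 k2 * tph k1 k2 r (a * m 0, (m 0)⁻¹ • b) ≠ 0 := by
    rw [hc0, hm0, one_pow, one_mul]; exact hτne
  have hlogT := ((hmulT.log hmne).congr_of_eventuallyEq hev).deriv
  rw [hc0, hm0, one_pow, one_mul] at hlogT
  -- linear decomposition of `L (a, -b)`
  have hdecomp : ((a, -b) : ℝ × (Fin (2 * r) → ℝ)) =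
      a • ((1 : ℝ), (0 : Fin (2 * r) → ℝ)) +
        ∑ i, (-(b i)) • (((0 : ℝ), (Pi.single i 1 : Fin (2 * r) → ℝ)) :
          ℝ × (Fin (2 * r) → ℝ)) := by
    apply Prod.ext
    · simp [Prod.fst_sum]
    · simp only [Prod.snd_add, Prod.smul_snd, Prod.snd_sum, smul_zero]
      rw [zero_add]
      have : ∀ i : Fin (2 * r), (-(b i)) • (Pi.single i (1 : ℝ) : Fin (2 * r) → ℝ)
          = Pi.single i (-(b i)) := by
        intro i
        rw [← Pi.single_smul]
        simp
      rw [Finset.sum_congr rfl fun i _ => this i, Finset.univ_sum_single (fun i => -(b i))]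
      rfl
  have hlin : L (a, -b) = a * L (1, 0) - ∑ i, b i * L (0, Pi.single i 1) := by
    rw [hdecomp, map_add, _root_.map_smul, map_sum]
    simp only [map_neg, _root_.map_smul, smul_eq_mul]
    rw [sub_eq_add_neg, ← Finset.sum_neg_distrib]
    congr 1
    exact Finset.sum_congr rfl fun i _ => by ring
  rw [hlogT, hAd]
  rw [Finset.sum_congr rfl fun i _ => by rw [hBd i]]
  have hNN := NN_cast (k1 := k1) (k2 := k2)
  rw [← hNN, hlin]
  simp_rw [mul_div_assoc']
  rw [← Finset.sum_div]
  field_simp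
  ring

end
end

section
/- For every i ∈ ℕ and every a ∈ ℝ: ∫_ℝ z^i e^{−z²/2 + az} dz = √(2π) · (d/da)^i [ e^{a²/2} ], where (d/da)^i denotes the i-th iterated derivative with respect to a of the function a ↦ e^{a²/2}, evaluated at a. -/
open MeasureTheory Real Filter Asymptotics Set

private lemma st14_tendsto_top (n : ℕ) (c : ℝ) :
    Tendsto (fun x : ℝ => x ^ n * Real.exp (-x ^ 2 / 2 + c * x)) atTop (nhds 0) := by
  have h1 : Tendsto (fun x : ℝ => x ^ n * Real.exp (-x)) atTop (nhds 0) :=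
    tendsto_pow_mul_exp_neg_atTop_nhds_zero n
  have h2 : Tendsto (fun x : ℝ => -x ^ 2 / 2 + (c + 1) * x) atTop atBot := by
    refine tendsto_atBot_mono' atTop ?_ tendsto_neg_atTop_atBot
    filter_upwards [eventually_ge_atTop (2 * (c + 1) + 2), eventually_ge_atTop 0] with x hx hx0
    nlinarith
  have h3 : Tendsto (fun x : ℝ => Real.exp (-x ^ 2 / 2 + (c + 1) * x)) atTop (nhds 0) :=
    Real.tendsto_exp_atBot.comp h2
  have h4 := h1.mul h3
  rw [mul_zero] at h4
  refine h4.congr fun x => ?_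
  rw [mul_assoc, ← Real.exp_add]
  ring_nf

private lemma st14_tendsto_bot (n : ℕ) (c : ℝ) :
    Tendsto (fun x : ℝ => x ^ n * Real.exp (-x ^ 2 / 2 + c * x)) atBot (nhds 0) := by
  have h := (st14_tendsto_top n (-c)).comp tendsto_neg_atBot_atTop
  have h2 := h.const_mul ((-1 : ℝ) ^ n)
  rw [mul_zero] at h2
  refine h2.congr fun x => ?_
  simp only [Function.comp_apply]
  rw [show (-x : ℝ) ^ n = (-1) ^ n * x ^ n by rw [neg_pow]]
  have hsq : (-1 : ℝ) ^ (n * 2) = 1 := by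
    rw [mul_comm, pow_mul]
    norm_num
  ring_nf
  rw [hsq, mul_one]

private lemma st14_integrable (n : ℕ) (a : ℝ) :
    Integrable (fun z : ℝ => z ^ n * Real.exp (-z ^ 2 / 2 + a * z)) := by
  have hcont : Continuous (fun z : ℝ => z ^ n * Real.exp (-z ^ 2 / 2 + a * z)) :=
    (continuous_pow n).mul (Real.continuous_exp.comp
      (((continuous_pow 2).neg.div_const 2).add (continuous_const.mul continuous_id)))
  refine hcont.locallyIntegrable.integrable_of_isBigO_atBot_atTop
    (g := fun x : ℝ => Real.exp x) ?_ ?_ (g' := fun x : ℝ => Real.exp (-x)) ?_ ?_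
  · have h := (st14_tendsto_bot n (a - 1)).isBigO_one (F := ℝ)
    have h2 := h.mul (isBigO_refl (fun x : ℝ => Real.exp x) atBot)
    refine h2.congr (fun x => ?_) (fun x => one_mul _)
    rw [mul_assoc, ← Real.exp_add]
    ring_nf
  · exact ⟨Iic 0, Iic_mem_atBot 0, integrableOn_exp_Iic 0⟩
  · have h := (st14_tendsto_top n (a + 1)).isBigO_one (F := ℝ)
    have h2 := h.mul (isBigO_refl (fun x : ℝ => Real.exp (-x)) atTop)
    refine h2.congr (fun x => ?_) (fun x => one_mul _)
    rw [mul_assoc, ← Real.exp_add]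
    ring_nf
  · refine ⟨Ioi 0, Ioi_mem_atTop 0, ?_⟩
    have := exp_neg_integrableOn_Ioi 0 (b := 1) one_pos
    simpa using this

private lemma st14_J0 (a : ℝ) :
    ∫ z : ℝ, Real.exp (-z ^ 2 / 2 + a * z) = Real.sqrt (2 * Real.pi) * Real.exp (a ^ 2 / 2) := by
  have h : ∀ z : ℝ, Real.exp (-z ^ 2 / 2 + a * z)
      = Real.exp (a ^ 2 / 2) * Real.exp (-(1 / 2) * (z - a) ^ 2) := by
    intro z
    rw [← Real.exp_add]
    ring_nf
  simp_rw [h]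
  rw [integral_const_mul,
    integral_sub_right_eq_self (fun u : ℝ => Real.exp (-(1 / 2) * u ^ 2)) a,
    integral_gaussian]
  rw [show (Real.pi / (1 / 2)) = 2 * Real.pi by ring]
  ring

/-- Integration by parts recurrence for the Gaussian moments. -/
private lemma st14_ibp (m : ℕ) (a : ℝ) :
    ∫ z : ℝ, z ^ (m + 1) * Real.exp (-z ^ 2 / 2 + a * z)
      = a * (∫ z : ℝ, z ^ m * Real.exp (-z ^ 2 / 2 + a * z))
        + m * ∫ z : ℝ, z ^ (m - 1) * Real.exp (-z ^ 2 / 2 + a * z) := by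
  set E : ℝ → ℝ := fun z => Real.exp (-z ^ 2 / 2 + a * z) with hE
  have hderiv : ∀ z : ℝ, HasDerivAt (fun z : ℝ => z ^ m * E z)
      ((m : ℝ) * z ^ (m - 1) * E z + z ^ m * (E z * (a - z))) z := by
    intro z
    have he : HasDerivAt (fun z : ℝ => -z ^ 2 / 2 + a * z) (a - z) z := by
      have h1 : HasDerivAt (fun z : ℝ => -z ^ 2 / 2) (-(2 * z ^ 1) / 2) z :=
        (hasDerivAt_pow 2 z).neg.div_const 2
      have h2 : HasDerivAt (fun z : ℝ => a * z) (a * 1) z :=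
        (hasDerivAt_id z).const_mul a
      have h3 := h1.add h2
      refine h3.congr_deriv ?_
      ring
    exact (hasDerivAt_pow m z).mul he.exp
  have hInt : ∀ k : ℕ, Integrable (fun z : ℝ => z ^ k * E z) := fun k => st14_integrable k a
  have heq : (fun z : ℝ => (m : ℝ) * z ^ (m - 1) * E z + z ^ m * (E z * (a - z)))
      = fun z : ℝ => ((m : ℝ) * (z ^ (m - 1) * E z) + a * (z ^ m * E z)) - z ^ (m + 1) * E z := by
    funext z
    rw [pow_succ]
    ring
  have hsum : Integrable (fun z : ℝ => (m : ℝ) * (z ^ (m - 1) * E z) + a * (z ^ m * E z)) :=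
    ((hInt (m - 1)).const_mul m).add ((hInt m).const_mul a)
  have hg' : Integrable (fun z : ℝ => (m : ℝ) * z ^ (m - 1) * E z + z ^ m * (E z * (a - z))) := by
    rw [heq]
    exact hsum.sub (hInt (m + 1))
  have htop : Tendsto (fun z : ℝ => z ^ m * E z) atTop (nhds 0) := st14_tendsto_top m a
  have hbot : Tendsto (fun z : ℝ => z ^ m * E z) atBot (nhds 0) := st14_tendsto_bot m a
  have hIic : ∫ z in Iic (0 : ℝ), ((m : ℝ) * z ^ (m - 1) * E z + z ^ m * (E z * (a - z)))
      = (0 : ℝ) ^ m * E 0 - 0 :=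
    integral_Iic_of_hasDerivAt_of_tendsto' (fun x _ => hderiv x) hg'.integrableOn hbot
  have hIoi : ∫ z in Ioi (0 : ℝ), ((m : ℝ) * z ^ (m - 1) * E z + z ^ m * (E z * (a - z)))
      = 0 - (0 : ℝ) ^ m * E 0 :=
    integral_Ioi_of_hasDerivAt_of_tendsto' (fun x _ => hderiv x) hg'.integrableOn htop
  have hzero : ∫ z : ℝ, ((m : ℝ) * z ^ (m - 1) * E z + z ^ m * (E z * (a - z))) = 0 := by
    rw [← intervalIntegral.integral_Iic_add_Ioi hg'.integrableOn hg'.integrableOn, hIic, hIoi]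
    ring
  rw [heq, integral_sub hsum (hInt (m + 1)),
    integral_add ((hInt (m - 1)).const_mul (m : ℝ)) ((hInt m).const_mul a),
    integral_const_mul, integral_const_mul] at hzero
  simp only [hE] at hzero ⊢
  linear_combination -hzero

private lemma st14_fsmooth : ContDiff ℝ (⊤ : ℕ∞) (fun x : ℝ => Real.exp (x ^ 2 / 2)) :=
  Real.contDiff_exp.comp ((contDiff_id.pow 2).div_const 2)

private lemma st14_Ddiff (k : ℕ) :
    Differentiable ℝ (iteratedDeriv k (fun x : ℝ => Real.exp (x ^ 2 / 2))) :=
  st14_fsmooth.differentiable_iteratedDeriv k (by exact_mod_cast lt_top_iff_ne_top.mpr (by simp))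

private lemma st14_D1 :
    iteratedDeriv 1 (fun x : ℝ => Real.exp (x ^ 2 / 2))
      = fun x : ℝ => x * Real.exp (x ^ 2 / 2) := by
  funext x
  rw [iteratedDeriv_one]
  have h : HasDerivAt (fun x : ℝ => Real.exp (x ^ 2 / 2))
      (Real.exp (x ^ 2 / 2) * (2 * x ^ 1 / 2)) x :=
    ((hasDerivAt_pow 2 x).div_const 2).exp
  rw [h.deriv]
  ring

private lemma st14_Q (n : ℕ) :
    iteratedDeriv (n + 1) (fun x : ℝ => Real.exp (x ^ 2 / 2))
      = fun x : ℝ => x * iteratedDeriv n (fun x : ℝ => Real.exp (x ^ 2 / 2)) x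
        + n * iteratedDeriv (n - 1) (fun x : ℝ => Real.exp (x ^ 2 / 2)) x := by
  set f : ℝ → ℝ := fun x => Real.exp (x ^ 2 / 2) with hf
  induction n with
  | zero =>
    funext x
    simp only [Nat.cast_zero, zero_mul, add_zero, iteratedDeriv_zero]
    rw [st14_D1]
  | succ n ih =>
    funext x
    conv_lhs => rw [iteratedDeriv_succ, ih]
    have hd := st14_Ddiff
    have hx1 : DifferentiableAt ℝ (fun x : ℝ => x * iteratedDeriv n f x) x :=
      differentiableAt_fun_id.mul (hd n x)
    have hx2 : DifferentiableAt ℝ (fun x : ℝ => (n : ℝ) * iteratedDeriv (n - 1) f x) x :=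
      (hd (n - 1) x).const_mul _
    rw [deriv_fun_add hx1 hx2, deriv_fun_mul differentiableAt_fun_id (hd n x),
      deriv_const_mul (n : ℝ) (hd (n - 1) x), deriv_id'', ← iteratedDeriv_succ,
      ← iteratedDeriv_succ]
    have hco : (n : ℝ) * iteratedDeriv (n - 1 + 1) f x = n * iteratedDeriv n f x := by
      cases n with
      | zero => simp
      | succ k => simp
    rw [hco]
    simp only [Nat.add_sub_cancel]
    push_cast
    ring

/-- `∫_ℝ z^i e^{-z²/2 + az} dz = √(2π)·(d/da)^i e^{a²/2}`. -/
theorem statement14 (i : ℕ) (a : ℝ) :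
    ∫ z : ℝ, z ^ i * Real.exp (-z ^ 2 / 2 + a * z)
      = Real.sqrt (2 * Real.pi) * iteratedDeriv i (fun x : ℝ => Real.exp (x ^ 2 / 2)) a := by
  induction i using Nat.twoStepInduction generalizing a with
  | zero =>
    simpa [iteratedDeriv_zero] using st14_J0 a
  | one =>
    have h := st14_ibp 0 a
    simp only [pow_zero, one_mul, Nat.cast_zero, zero_mul, add_zero, zero_add, pow_one] at h
    simp only [pow_one]
    rw [h, st14_J0 a, st14_D1]
    ring
  | more n ih ih1 =>
    have h := st14_ibp (n + 1) a
    simp only [Nat.add_sub_cancel] at h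
    rw [show n + 2 = n + 1 + 1 from rfl, h, ih1 a, ih a, st14_Q (n + 1)]
    simp only [Nat.add_sub_cancel]
    push_cast
    ring
end
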